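/- arXiv:1509.08384 — 6 statements merged into one kernel-verified Lean document; each statement's English description precedes it below -/
import Mathlib

section
/- Let γ : ℝ → ℝ be continuously differentiable, 1-periodic, with γ(t) ≥ 0 for all t, A := sup_t |γ′(t)| < ∞, and let ε > 0 satisfy 2ε·sup_t γ(t) ≤ 1. Let φ : ℝ² → ℝ be C¹ on an open neighborhood of the closure of Ω_ε. Define Eφ : Ω₀ → ℝ by Eφ(x) = φ(x) for x ∈ Ω_ε and Eφ(x₁,x₂) = φ(x₁, 2εγ(x₁/ε) − x₂) for x ∈ Ω₀ \ Ω_ε. Then Eφ is differentiable at almost every point of Ω₀ and ∫_{Ω₀} (Eφ(x)² + ‖∇Eφ(x)‖²) dx ≤ (2 + 2A² + 2A√(1+A²)) · ∫_{Ω_ε} (φ(x)² + ‖∇φ(x)‖²) dx. -/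
open MeasureTheory Set
open scoped Classical

/-- first partial derivative of a function on `ℝ²` -/
noncomputable def pd1 (u : ℝ × ℝ → ℝ) (x : ℝ × ℝ) : ℝ := fderiv ℝ u x (1, 0)

/-- second partial derivative of a function on `ℝ²` -/
noncomputable def pd2 (u : ℝ × ℝ → ℝ) (x : ℝ × ℝ) : ℝ := fderiv ℝ u x (0, 1)

/-! Let `h t = ε γ (t / ε)` and `T (x₁, x₂) = (x₁, 2 h x₁ - x₂)`, the reflection across the graph
of `h`. It preserves Lebesgue measure, acting on each vertical line as a reflection, and maps the
part of the square below the graph into `Ωε`; the graph itself is null. Below the graph the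
extension is `φ ∘ T`, whose gradient is `(∂₁φ + 2h' ∂₂φ, -∂₂φ) ∘ T`, a linear map of `∇φ ∘ T` with
squared operator norm at most `1 + 2A² + 2A√(1 + A²)`. Changing variables bounds the energy below
the graph by that constant times the energy on `Ωε`, and adding the energy on `Ωε` itself gives
the constant `2 + 2A² + 2A√(1 + A²)`. -/

open Filter Topology

/-- The squared operator norm of the shear `[[1, 2g], [0, 1]]` is `1 + 2g² + 2|g|√(1 + g²)`. -/
theorem shear_sq_add_sq_le {A g : ℝ} (hg : |g| ≤ A) (a b : ℝ) :
    (a + 2 * g * b) ^ 2 + b ^ 2 ≤ (1 + 2 * A ^ 2 + 2 * A * √(1 + A ^ 2)) * (a ^ 2 + b ^ 2) := by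
  set s := √(1 + A ^ 2)
  have hs : s ^ 2 = 1 + A ^ 2 := Real.sq_sqrt (by positivity)
  have hA : 0 ≤ A := (abs_nonneg g).trans hg
  have hsA : A < s := by nlinarith [Real.sqrt_nonneg (1 + A ^ 2)]
  -- AM-GM, using `(s + A) (s - A) = 1`
  have amgm : 2 * |a * b| ≤ (s + A) * a ^ 2 + (s - A) * b ^ 2 := by
    have key : (s + A) * (|a| - (s - A) * |b|) ^ 2
        = (s + A) * a ^ 2 + (s - A) * b ^ 2 - 2 * |a * b| := by
      rw [abs_mul]
      linear_combination (s + A) * sq_abs a + (s - A) * sq_abs b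
        + (-2 * |a| * |b| + (s - A) * |b| ^ 2) * hs
    nlinarith [mul_nonneg (by linarith : 0 ≤ s + A) (sq_nonneg (|a| - (s - A) * |b|))]
  have cross : g * (a * b) ≤ A * |a * b| :=
    (le_abs_self _).trans ((abs_mul g _).symm ▸ mul_le_mul_of_nonneg_right hg (abs_nonneg _))
  have hg2 : g ^ 2 ≤ A ^ 2 := sq_le_sq' (abs_le.mp hg).1 (abs_le.mp hg).2
  nlinarith

theorem measure_prod_volume_graph_eq_zero {α : Type*} [MeasurableSpace α] (μ : Measure α)
    [SFinite μ] {f : α → ℝ} (hf : Measurable f) :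
    μ.prod volume {p : α × ℝ | p.2 = f p.1} = 0 := by
  rw [Measure.prod_apply (measurableSet_graph hf)]
  have : ∀ a, Prod.mk a ⁻¹' {p : α × ℝ | p.2 = f p.1} = {f a} := fun a => by ext; simp
  simp [this]

def graphReflection {α : Type*} (h : α → ℝ) (x : α × ℝ) : α × ℝ := (x.1, 2 * h x.1 - x.2)

section graphReflection

variable {α : Type*} {h : α → ℝ}

theorem graphReflection_involutive : Function.Involutive (graphReflection h) := fun x => by
  simp [graphReflection]

variable [MeasurableSpace α]

theorem measurable_graphReflection (hh : Measurable h) : Measurable (graphReflection h) :=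
  measurable_fst.prodMk (((hh.comp measurable_fst).const_mul 2).sub measurable_snd)

theorem measurePreserving_graphReflection (μ : Measure α) [SFinite μ] (hh : Measurable h) :
    MeasurePreserving (graphReflection h) (μ.prod volume) (μ.prod volume) :=
  (MeasurePreserving.id μ).skew_product (g := fun a y => 2 * h a - y)
    (((hh.comp measurable_fst).const_mul 2).sub measurable_snd)
    (ae_of_all _ fun a => Measure.map_sub_left_eq_self volume (2 * h a))

end graphReflection

section derivatives

variable {h : ℝ → ℝ} {h' : ℝ} {x : ℝ × ℝ}

theorem hasFDerivAt_graphReflection (hh : HasDerivAt h h' x.1) :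
    HasFDerivAt (graphReflection h)
      ((ContinuousLinearMap.fst ℝ ℝ ℝ).prod
        ((2 * h') • ContinuousLinearMap.fst ℝ ℝ ℝ - ContinuousLinearMap.snd ℝ ℝ ℝ)) x :=
  hasFDerivAt_fst.prodMk (((hh.const_mul 2).comp_hasFDerivAt x hasFDerivAt_fst).sub hasFDerivAt_snd)

theorem pd1_comp_graphReflection (hh : HasDerivAt h h' x.1)
    {φ : ℝ × ℝ → ℝ} (hφ : DifferentiableAt ℝ φ (graphReflection h x)) :
    pd1 (φ ∘ graphReflection h) x =
      pd1 φ (graphReflection h x) + 2 * h' * pd2 φ (graphReflection h x) := by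
  have hv : ((1 : ℝ), 2 * h') = (1, 0) + (2 * h') • (0, 1) := by simp
  simp only [pd1, pd2, (hφ.hasFDerivAt.comp x (hasFDerivAt_graphReflection hh)).fderiv]
  simp only [ContinuousLinearMap.comp_apply, ContinuousLinearMap.prod_apply,
    ContinuousLinearMap.coe_fst', ContinuousLinearMap.coe_snd', sub_apply, smul_apply, smul_eq_mul,
    mul_one, sub_zero]
  rw [hv, map_add, map_smul, smul_eq_mul]

theorem pd2_comp_graphReflection (hh : HasDerivAt h h' x.1)
    {φ : ℝ × ℝ → ℝ} (hφ : DifferentiableAt ℝ φ (graphReflection h x)) :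
    pd2 (φ ∘ graphReflection h) x = -pd2 φ (graphReflection h x) := by
  simp [pd2, (hφ.hasFDerivAt.comp x (hasFDerivAt_graphReflection hh)).fderiv, ← map_neg]

end derivatives

theorem setIntegral_le_mul_setIntegral_of_mapsTo {α β : Type*} [MeasurableSpace α]
    [MeasurableSpace β] {μ : Measure α} {ν : Measure β} {T : α → β}
    (hT : MeasurePreserving T μ ν) (hTe : MeasurableEmbedding T) {s : Set α} {t : Set β}
    (hs : MeasurableSet s) (hst : MapsTo T s t) {f : α → ℝ} {g : β → ℝ} {C : ℝ} (hC : 0 ≤ C)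
    (hf : IntegrableOn f s μ) (hg : IntegrableOn g t ν) (hg0 : 0 ≤ g)
    (hfg : ∀ x ∈ s, f x ≤ C * g (T x)) :
    ∫ x in s, f x ∂μ ≤ C * ∫ y in t, g y ∂ν := by
  have hgT : IntegrableOn (g ∘ T) s μ :=
    (hT.integrableOn_image hTe).mp (hg.mono_set (image_subset_iff.mpr hst))
  calc ∫ x in s, f x ∂μ ≤ ∫ x in s, C * g (T x) ∂μ :=
        setIntegral_mono_on hf (hgT.const_mul C) hs hfg
    _ = C * ∫ y in T '' s, g y ∂ν := by rw [integral_const_mul, hT.setIntegral_image_emb hTe]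
    _ ≤ C * ∫ y in t, g y ∂ν := mul_le_mul_of_nonneg_left
      (setIntegral_mono_set hg (ae_of_all _ hg0) (image_subset_iff.mpr hst).eventuallyLE) hC

noncomputable def energyDensity (u : ℝ × ℝ → ℝ) (x : ℝ × ℝ) : ℝ :=
  u x ^ 2 + (pd1 u x ^ 2 + pd2 u x ^ 2)

theorem energyDensity_nonneg (u : ℝ × ℝ → ℝ) : 0 ≤ energyDensity u := fun x => by
  unfold energyDensity; positivity

theorem Filter.EventuallyEq.energyDensity_eq {u v : ℝ × ℝ → ℝ} {x : ℝ × ℝ} (huv : u =ᶠ[𝓝 x] v) :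
    energyDensity u x = energyDensity v x := by
  simp only [energyDensity, pd1, pd2, huv.eq_of_nhds, huv.fderiv_eq]

theorem energyDensity_comp_graphReflection_le {h : ℝ → ℝ} {h' A : ℝ} {x : ℝ × ℝ}
    (hh : HasDerivAt h h' x.1) (hA : |h'| ≤ A) {φ : ℝ × ℝ → ℝ}
    (hφ : DifferentiableAt ℝ φ (graphReflection h x)) :
    energyDensity (φ ∘ graphReflection h) x ≤
      (1 + 2 * A ^ 2 + 2 * A * √(1 + A ^ 2)) * energyDensity φ (graphReflection h x) := by
  have hC : 0 ≤ 2 * A ^ 2 + 2 * A * √(1 + A ^ 2) := by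
    have := (abs_nonneg h').trans hA; positivity
  have := shear_sq_add_sq_le hA (pd1 φ (graphReflection h x)) (pd2 φ (graphReflection h x))
  simp only [energyDensity, pd1_comp_graphReflection hh hφ, pd2_comp_graphReflection hh hφ,
    Function.comp_apply, neg_sq]
  nlinarith [sq_nonneg (φ (graphReflection h x))]

def regionAbove (h : ℝ → ℝ) : Set (ℝ × ℝ) := {x | 0 < x.1 ∧ x.1 < 1 ∧ h x.1 < x.2 ∧ x.2 < 1}

def regionBelow (h : ℝ → ℝ) : Set (ℝ × ℝ) := {x | 0 < x.1 ∧ x.1 < 1 ∧ 0 < x.2 ∧ x.2 < h x.1}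

noncomputable def reflectionExtension (h : ℝ → ℝ) (φ : ℝ × ℝ → ℝ) (x : ℝ × ℝ) : ℝ :=
  if x ∈ regionAbove h then φ x else φ (graphReflection h x)

section regions

variable {h : ℝ → ℝ}

theorem isOpen_regionAbove (hh : Continuous h) : IsOpen (regionAbove h) :=
  (isOpen_lt continuous_const continuous_fst).inter <|
    (isOpen_lt continuous_fst continuous_const).inter <|
      (isOpen_lt (hh.comp continuous_fst) continuous_snd).inter <|
        isOpen_lt continuous_snd continuous_const

theorem isOpen_regionBelow (hh : Continuous h) : IsOpen (regionBelow h) :=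
  (isOpen_lt continuous_const continuous_fst).inter <|
    (isOpen_lt continuous_fst continuous_const).inter <|
      (isOpen_lt continuous_const continuous_snd).inter <|
        isOpen_lt continuous_snd (hh.comp continuous_fst)

theorem disjoint_regionAbove_regionBelow : Disjoint (regionAbove h) (regionBelow h) :=
  disjoint_left.mpr fun _ hA hB => hA.2.2.1.not_gt hB.2.2.2

theorem mapsTo_graphReflection_regionBelow (h1 : ∀ t, 2 * h t ≤ 1) :
    MapsTo (graphReflection h) (regionBelow h) (regionAbove h) := fun x ⟨h01, h11, h02, h12⟩ =>
  ⟨h01, h11, by simp only [graphReflection]; linarith,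
    by simp only [graphReflection]; linarith [h1 x.1]⟩

theorem Ioo_prod_Ioo_ae_eq_regionAbove_union_regionBelow (hh : Measurable h)
    (h0 : ∀ t, 0 ≤ h t) (h1 : ∀ t, 2 * h t ≤ 1) :
    Ioo (0 : ℝ) 1 ×ˢ Ioo (0 : ℝ) 1 =ᵐ[volume] (regionAbove h ∪ regionBelow h : Set (ℝ × ℝ)) := by
  refine ae_eq_set.mpr ⟨?_, ?_⟩
  · refine measure_mono_null (fun x ⟨⟨⟨h01, h11⟩, h02, h12⟩, hx⟩ => ?_)
      (Measure.volume_eq_prod ℝ ℝ ▸ measure_prod_volume_graph_eq_zero volume hh)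
    simp only [mem_union, not_or] at hx
    by_contra hne
    rcases lt_or_gt_of_ne hne with hlt | hgt
    · exact hx.2 ⟨h01, h11, h02, hlt⟩
    · exact hx.1 ⟨h01, h11, hgt, h12⟩
  · rw [sdiff_eq_empty.mpr, measure_empty]
    rintro x (⟨h01, h11, h2, h12⟩ | ⟨h01, h11, h02, h2⟩)
    · exact ⟨⟨h01, h11⟩, (h0 x.1).trans_lt h2, h12⟩
    · exact ⟨⟨h01, h11⟩, h02, by linarith [h0 x.1, h1 x.1]⟩

variable (φ : ℝ × ℝ → ℝ)

theorem reflectionExtension_eventuallyEq_of_mem_regionAbove (hh : Continuous h) {x : ℝ × ℝ}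
    (hx : x ∈ regionAbove h) : reflectionExtension h φ =ᶠ[𝓝 x] φ :=
  eventually_of_mem ((isOpen_regionAbove hh).mem_nhds hx) fun _ hy => if_pos hy

theorem reflectionExtension_eventuallyEq_of_mem_regionBelow (hh : Continuous h) {x : ℝ × ℝ}
    (hx : x ∈ regionBelow h) : reflectionExtension h φ =ᶠ[𝓝 x] φ ∘ graphReflection h :=
  eventually_of_mem ((isOpen_regionBelow hh).mem_nhds hx) fun _ hy =>
    if_neg (disjoint_left.mp disjoint_regionAbove_regionBelow.symm hy)

end regions

section extension

variable {h h' : ℝ → ℝ} {φ : ℝ × ℝ → ℝ}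

theorem ae_differentiableAt_reflectionExtension (hh : ∀ t, HasDerivAt h (h' t) t)
    (h0 : ∀ t, 0 ≤ h t) (h1 : ∀ t, 2 * h t ≤ 1) (hφ : DifferentiableOn ℝ φ (regionAbove h)) :
    ∀ᵐ x ∂(volume.restrict (Ioo (0 : ℝ) 1 ×ˢ Ioo (0 : ℝ) 1)),
      DifferentiableAt ℝ (reflectionExtension h φ) x := by
  have hcont : Continuous h := continuous_iff_continuousAt.mpr fun t => (hh t).continuousAt
  rw [Measure.restrict_congr_set (Ioo_prod_Ioo_ae_eq_regionAbove_union_regionBelow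
    hcont.measurable h0 h1)]
  refine ae_restrict_of_forall_mem
    ((isOpen_regionAbove hcont).union (isOpen_regionBelow hcont)).measurableSet ?_
  rintro x (hx | hx)
  · exact (reflectionExtension_eventuallyEq_of_mem_regionAbove φ hcont hx).differentiableAt_iff.mpr
      (hφ.differentiableAt ((isOpen_regionAbove hcont).mem_nhds hx))
  · have hTx := mapsTo_graphReflection_regionBelow h1 hx
    exact (reflectionExtension_eventuallyEq_of_mem_regionBelow φ hcont hx).differentiableAt_iff.mpr
      ((hφ.differentiableAt ((isOpen_regionAbove hcont).mem_nhds hTx)).hasFDerivAt.comp x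
        (hasFDerivAt_graphReflection (hh x.1))).differentiableAt

theorem integral_energyDensity_reflectionExtension_le (hh : ∀ t, HasDerivAt h (h' t) t)
    (h0 : ∀ t, 0 ≤ h t) (h1 : ∀ t, 2 * h t ≤ 1) (hφ : DifferentiableOn ℝ φ (regionAbove h))
    {A : ℝ} (hA : ∀ t, |h' t| ≤ A) :
    ∫ x in Ioo (0 : ℝ) 1 ×ˢ Ioo (0 : ℝ) 1, energyDensity (reflectionExtension h φ) x ≤
      (2 + 2 * A ^ 2 + 2 * A * √(1 + A ^ 2)) * ∫ x in regionAbove h, energyDensity φ x := by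
  have hcont : Continuous h := continuous_iff_continuousAt.mpr fun t => (hh t).continuousAt
  have hC : 0 ≤ 2 * A ^ 2 + 2 * A * √(1 + A ^ 2) := by
    have := (abs_nonneg _).trans (hA 0); positivity
  have hae := Ioo_prod_Ioo_ae_eq_regionAbove_union_regionBelow hcont.measurable h0 h1
  have hAbove := (isOpen_regionAbove hcont).measurableSet
  have hBelow := (isOpen_regionBelow hcont).measurableSet
  -- A non-integrable energy has integral `0`, so integrability of `∇φ` up to `∂Ωε` is not needed.
  rcases em' (IntegrableOn (energyDensity (reflectionExtension h φ)) (Ioo 0 1 ×ˢ Ioo 0 1))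
    with hint | hint
  · rw [integral_undef hint]
    exact mul_nonneg (by linarith) (setIntegral_nonneg hAbove fun x _ => energyDensity_nonneg φ x)
  have hintAbove := (hint.congr_set_ae hae.symm).left_of_union
  have hintBelow := (hint.congr_set_ae hae.symm).right_of_union
  have hEqAbove :
      EqOn (energyDensity (reflectionExtension h φ)) (energyDensity φ) (regionAbove h) :=
    fun x hx => (reflectionExtension_eventuallyEq_of_mem_regionAbove φ hcont hx).energyDensity_eq
  have hBelowLe : ∫ x in regionBelow h, energyDensity (reflectionExtension h φ) x ≤
      (1 + 2 * A ^ 2 + 2 * A * √(1 + A ^ 2)) * ∫ x in regionAbove h, energyDensity φ x := by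
    refine setIntegral_le_mul_setIntegral_of_mapsTo ?_
      ((measurable_graphReflection hcont.measurable).measurableEmbedding
        graphReflection_involutive.injective)
      hBelow (mapsTo_graphReflection_regionBelow h1) (by linarith) hintBelow
      (hintAbove.congr_fun hEqAbove hAbove) (energyDensity_nonneg φ) fun x hx => ?_
    · rw [Measure.volume_eq_prod]
      exact measurePreserving_graphReflection volume hcont.measurable
    · have hTx := mapsTo_graphReflection_regionBelow h1 hx
      rw [(reflectionExtension_eventuallyEq_of_mem_regionBelow φ hcont hx).energyDensity_eq]
      exact energyDensity_comp_graphReflection_le (hh x.1) (hA x.1)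
        (hφ.differentiableAt ((isOpen_regionAbove hcont).mem_nhds hTx))
  rw [setIntegral_congr_set hae, setIntegral_union disjoint_regionAbove_regionBelow hBelow
    hintAbove hintBelow, setIntegral_congr_fun hAbove hEqAbove]
  linarith

end extension

theorem extension_energy_estimate_general
    (γ : ℝ → ℝ) (hγ : ContDiff ℝ 1 γ)
    (hpos : ∀ t, 0 ≤ γ t)
    (A : ℝ) (hA : IsLUB (Set.range fun t => |deriv γ t|) A)
    (ε : ℝ) (hε : 0 < ε) (hεγ : ∀ t, 2 * ε * γ t ≤ 1)
    (Ωε : Set (ℝ × ℝ))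
    (hΩε : Ωε = {x : ℝ × ℝ | 0 < x.1 ∧ x.1 < 1 ∧ ε * γ (x.1 / ε) < x.2 ∧ x.2 < 1})
    (Ω₀ : Set (ℝ × ℝ)) (hΩ₀ : Ω₀ = Set.Ioo (0:ℝ) 1 ×ˢ Set.Ioo (0:ℝ) 1)
    (φ : ℝ × ℝ → ℝ) (U : Set (ℝ × ℝ)) (hUc : closure Ωε ⊆ U)
    (hφ : ContDiffOn ℝ 1 φ U)
    (E : ℝ × ℝ → ℝ)
    (hE : E = fun x : ℝ × ℝ =>
      if x ∈ Ωε then φ x else φ (x.1, 2 * ε * γ (x.1 / ε) - x.2)) :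
    (∀ᵐ x ∂(volume.restrict Ω₀), DifferentiableAt ℝ E x) ∧
    (∫ x in Ω₀, ((E x) ^ 2 + ((pd1 E x) ^ 2 + (pd2 E x) ^ 2))) ≤
      (2 + 2 * A ^ 2 + 2 * A * Real.sqrt (1 + A ^ 2)) *
        ∫ x in Ωε, ((φ x) ^ 2 + ((pd1 φ x) ^ 2 + (pd2 φ x) ^ 2)) := by
  set h : ℝ → ℝ := fun t => ε * γ (t / ε)
  have hh : ∀ t, HasDerivAt h (deriv γ (t / ε)) t := fun t =>
    ((((hγ.differentiable one_ne_zero) (t / ε)).hasDerivAt.comp t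
      ((hasDerivAt_id t).div_const ε)).const_mul ε).congr_deriv (by field_simp)
  have h0 : ∀ t, 0 ≤ h t := fun t => mul_nonneg hε.le (hpos _)
  have h1 : ∀ t, 2 * h t ≤ 1 := fun t => by linarith [hεγ (t / ε)]
  have hΩε' : Ωε = regionAbove h := hΩε
  subst hΩ₀ hΩε'
  have hφ' := (hφ.differentiableOn one_ne_zero).mono (subset_closure.trans hUc)
  have hE' : E = reflectionExtension h φ := by
    funext x
    simp only [hE, reflectionExtension, graphReflection, h, mul_assoc]
  subst hE'
  exact ⟨ae_differentiableAt_reflectionExtension hh h0 h1 hφ',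
    integral_energyDensity_reflectionExtension_le hh h0 h1 hφ' fun t => hA.1 (mem_range_self _)⟩

/-- Lemma 3.1 of the paper: the extension by reflection across the rough boundary
of a `C¹` function is a.e. differentiable on the flattened domain `Ω₀` and its
`H¹`-energy is controlled by that of the original function on `Ω_ε`, with the
explicit constant `2 + 2A² + 2A√(1+A²)` where `A = sup |γ'|`. -/
theorem extension_energy_estimate
    (γ : ℝ → ℝ) (hγ : ContDiff ℝ 1 γ) (hper : ∀ t, γ (t + 1) = γ t)
    (hpos : ∀ t, 0 ≤ γ t)
    (A : ℝ) (hA : IsLUB (Set.range fun t => |deriv γ t|) A)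
    (ε : ℝ) (hε : 0 < ε) (hεγ : ∀ t, 2 * ε * γ t ≤ 1)
    (Ωε : Set (ℝ × ℝ))
    (hΩε : Ωε = {x : ℝ × ℝ | 0 < x.1 ∧ x.1 < 1 ∧ ε * γ (x.1 / ε) < x.2 ∧ x.2 < 1})
    (Ω₀ : Set (ℝ × ℝ)) (hΩ₀ : Ω₀ = Set.Ioo (0:ℝ) 1 ×ˢ Set.Ioo (0:ℝ) 1)
    (φ : ℝ × ℝ → ℝ) (U : Set (ℝ × ℝ)) (hU : IsOpen U) (hUc : closure Ωε ⊆ U)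
    (hφ : ContDiffOn ℝ 1 φ U)
    (E : ℝ × ℝ → ℝ)
    (hE : E = fun x : ℝ × ℝ =>
      if x ∈ Ωε then φ x else φ (x.1, 2 * ε * γ (x.1 / ε) - x.2)) :
    (∀ᵐ x ∂(volume.restrict Ω₀), DifferentiableAt ℝ E x) ∧
    (∫ x in Ω₀, ((E x) ^ 2 + ((pd1 E x) ^ 2 + (pd2 E x) ^ 2))) ≤
      (2 + 2 * A ^ 2 + 2 * A * Real.sqrt (1 + A ^ 2)) *
        ∫ x in Ωε, ((φ x) ^ 2 + ((pd1 φ x) ^ 2 + (pd2 φ x) ^ 2)) :=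
  extension_energy_estimate_general γ hγ hpos A hA ε hε hεγ Ωε hΩε Ω₀ hΩ₀ φ U hUc hφ E hE
end

section
/- Let γ : ℝ → ℝ be continuously differentiable, 1-periodic, with γ(t) ≥ 0 for all t, and let ε > 0 satisfy 2ε·sup_t γ(t) ≤ 1. Let φ : ℝ² → ℝ be continuous on an open neighborhood of the closure of Ω_ε. Then ∫_{Ω₀ \ Ω_ε} φ(x₁, 2εγ(x₁/ε) − x₂)² dx ≤ ∫_{Ω_ε} φ(x)² dx. -/
open MeasureTheory Set

/-- The `L²` bound for the reflected function in the proof of Lemma 3.1: the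
reflection `x ↦ (x₁, 2εγ(x₁/ε) − x₂)` maps `Ω₀ \ Ω_ε` into `Ω_ε` with Jacobian
of modulus one, hence does not increase the `L²` norm. -/
theorem reflection_L2_estimate
    (γ : ℝ → ℝ) (hγ : ContDiff ℝ 1 γ) (hper : ∀ t, γ (t + 1) = γ t)
    (hpos : ∀ t, 0 ≤ γ t)
    (ε : ℝ) (hε : 0 < ε) (hεγ : ∀ t, 2 * ε * γ t ≤ 1)
    (Ωε : Set (ℝ × ℝ))
    (hΩε : Ωε = {x : ℝ × ℝ | 0 < x.1 ∧ x.1 < 1 ∧ ε * γ (x.1 / ε) < x.2 ∧ x.2 < 1})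
    (Ω₀ : Set (ℝ × ℝ)) (hΩ₀ : Ω₀ = Set.Ioo (0:ℝ) 1 ×ˢ Set.Ioo (0:ℝ) 1)
    (φ : ℝ × ℝ → ℝ) (U : Set (ℝ × ℝ)) (hU : IsOpen U) (hUc : closure Ωε ⊆ U)
    (hφ : ContinuousOn φ U) :
    (∫ x in Ω₀ \ Ωε, (φ (x.1, 2 * ε * γ (x.1 / ε) - x.2)) ^ 2) ≤
      ∫ x in Ωε, (φ x) ^ 2 := by
  -- the reflection map
  set c : ℝ → ℝ := fun t => 2 * ε * γ (t / ε) with hc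
  set T : ℝ × ℝ → ℝ × ℝ := fun p => (p.1, c p.1 - p.2) with hT
  have hγc : Continuous γ := hγ.continuous
  have hcc : Continuous c := by
    exact continuous_const.mul (hγc.comp (continuous_id.div_const ε))
  have hTc : Continuous T := continuous_fst.prodMk ((hcc.comp continuous_fst).sub continuous_snd)
  have hTinv : Function.Involutive T := by
    intro p; simp [hT]
  -- T is a measurable embedding
  have hemb : MeasurableEmbedding T :=
    (Homeomorph.mk (hTinv.toPerm T) hTc hTc).measurableEmbedding
  -- T is measure preserving
  have hmp : MeasurePreserving T volume volume := by
    rw [Measure.volume_eq_prod]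
    have hgm : Measurable (Function.uncurry fun (a b : ℝ) => c a - b) :=
      ((hcc.comp continuous_fst).sub continuous_snd).measurable
    exact (MeasurePreserving.id volume).skew_product hgm
      (Filter.Eventually.of_forall fun x =>
        (Measure.measurePreserving_sub_left volume (c x)).map_eq)
  -- basic positivity
  have hεγ' : ∀ t, 0 ≤ ε * γ t := fun t => mul_nonneg hε.le (hpos t)
  have hεγhalf : ∀ t, ε * γ t ≤ 1 / 2 := by
    intro t
    have := hεγ t
    linarith
  -- the open region below the graph
  set D : Set (ℝ × ℝ) :=
    {x : ℝ × ℝ | 0 < x.1 ∧ x.1 < 1 ∧ 0 < x.2 ∧ x.2 < ε * γ (x.1 / ε)} with hD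
  -- the graph is null
  have hGnull : volume {x : ℝ × ℝ | x.2 = ε * γ (x.1 / ε)} = 0 := by
    have hGm : MeasurableSet {x : ℝ × ℝ | x.2 = ε * γ (x.1 / ε)} :=
      (isClosed_eq continuous_snd
        ((continuous_const.mul (hγc.comp (continuous_id.div_const ε))).comp
          continuous_fst)).measurableSet
    rw [Measure.volume_eq_prod, Measure.prod_apply hGm]
    have : ∀ x : ℝ, (Prod.mk x ⁻¹' {p : ℝ × ℝ | p.2 = ε * γ (p.1 / ε)}) = {ε * γ (x / ε)} := by
      intro x; ext y; simp [Set.mem_singleton_iff]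
    simp only [this, measure_singleton, lintegral_zero]
  -- Ω₀ \ Ωε is a.e. equal to D
  have haeD : (Ω₀ \ Ωε : Set (ℝ × ℝ)) =ᵐ[volume] D := by
    rw [MeasureTheory.ae_eq_set]
    constructor
    · refine measure_mono_null (fun x hx => ?_) hGnull
      obtain ⟨⟨hx0, hxΩ⟩, hxε⟩ := hx
      rw [hΩ₀] at hx0
      obtain ⟨⟨h1, h2⟩, ⟨h3, h4⟩⟩ : ((0:ℝ) < x.1 ∧ x.1 < 1) ∧ ((0:ℝ) < x.2 ∧ x.2 < 1) := by
        simpa [Set.mem_prod] using hx0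
      have hle : x.2 ≤ ε * γ (x.1 / ε) := by
        by_contra hlt
        push_neg at hlt
        exact (hΩε ▸ hxΩ) ⟨h1, h2, hlt, h4⟩
      have : ¬ x.2 < ε * γ (x.1 / ε) := by
        intro hlt
        exact hxε ⟨h1, h2, h3, hlt⟩
      exact le_antisymm hle (not_lt.mp this)
    · refine measure_mono_null (fun x hx => ?_) (measure_empty (μ := volume))
      exact absurd hx.1 (fun h => hx.2 (by
        obtain ⟨h1, h2, h3, h4⟩ := h
        constructor
        · rw [hΩ₀]
          refine ⟨⟨h1, h2⟩, h3, lt_of_lt_of_le h4 ?_⟩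
          exact (hεγhalf _).trans (by norm_num)
        · rw [hΩε]
          rintro ⟨-, -, h5, -⟩
          exact absurd h4 (not_lt.mpr h5.le)))
  -- T maps D into Ωε
  have hTD : T '' D ⊆ Ωε := by
    rintro y ⟨x, ⟨h1, h2, h3, h4⟩, rfl⟩
    rw [hΩε]
    refine ⟨h1, h2, ?_, ?_⟩
    · show ε * γ (x.1 / ε) < c x.1 - x.2
      have : c x.1 = 2 * (ε * γ (x.1 / ε)) := by rw [hc]; ring
      rw [this]; linarith
    · show c x.1 - x.2 < 1
      have h5 := hεγ (x.1 / ε)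
      have : c x.1 ≤ 1 := h5
      linarith
  -- integrability of φ² on Ωε
  have hΩbd : Bornology.IsBounded Ωε := by
    refine (Bornology.IsBounded.prod (Metric.isBounded_Ioo (0:ℝ) 1)
      (Metric.isBounded_Ioo (0:ℝ) 1)).subset ?_
    rw [hΩε]
    rintro x ⟨h1, h2, h3, h4⟩
    exact ⟨⟨h1, h2⟩, lt_of_le_of_lt (hεγ' _) h3, h4⟩
  have hcmp : IsCompact (closure Ωε) := hΩbd.isCompact_closure
  have hint : IntegrableOn (fun x => (φ x) ^ 2) Ωε volume := by
    refine IntegrableOn.mono_set ?_ subset_closure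
    exact ((hφ.mono hUc).pow 2).integrableOn_compact hcmp
  -- main chain
  calc (∫ x in Ω₀ \ Ωε, (φ (x.1, 2 * ε * γ (x.1 / ε) - x.2)) ^ 2)
      = ∫ x in D, (φ (T x)) ^ 2 := by
        refine setIntegral_congr_set haeD
    _ = ∫ y in T '' D, (φ y) ^ 2 := (hmp.setIntegral_image_emb hemb (fun y => (φ y) ^ 2) D).symm
    _ ≤ ∫ x in Ωε, (φ x) ^ 2 := by
        refine setIntegral_mono_set hint
          (Filter.Eventually.of_forall fun y => sq_nonneg _) (HasSubset.Subset.eventuallyLE hTD)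
end

section
/- Let γ : ℝ → ℝ be continuously differentiable, 1-periodic, with γ(t) ≥ 0 for all t and A := sup_t |γ′(t)| < ∞, and let ε > 0 satisfy 2ε·sup_t γ(t) ≤ 1. Let φ : ℝ² → ℝ be C¹ on an open neighborhood of the closure of Ω_ε, and write R(x) := (x₁, 2εγ(x₁/ε) − x₂). Then for every t > 0, ∫_{Ω₀ \ Ω_ε} (∂₁φ(R(x)) + 2γ′(x₁/ε)·∂₂φ(R(x)))² dx ≤ (1+t)·∫_{Ω_ε} (∂₁φ)² dx + 4A²(1 + 1/t)·∫_{Ω_ε} (∂₂φ)² dx. -/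
open MeasureTheory Set

private lemma key_ineq (a b d A t : ℝ) (ht : 0 < t) (hd : |d| ≤ A) :
    (a + 2 * d * b) ^ 2 ≤ (1 + t) * a ^ 2 + 4 * A ^ 2 * (1 + 1 / t) * b ^ 2 := by
  have hd2 : d ^ 2 ≤ A ^ 2 := by nlinarith [abs_nonneg d, sq_abs d]
  have key' : t * ((a + 2 * d * b) ^ 2) ≤ t * (1 + t) * a ^ 2 + 4 * A ^ 2 * (t + 1) * b ^ 2 := by
    nlinarith [sq_nonneg (t * a - 2 * d * b), sq_nonneg b, ht.le,
      mul_nonneg (mul_nonneg (sub_nonneg.mpr hd2) ht.le) (sq_nonneg b),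
      mul_nonneg (sub_nonneg.mpr hd2) (sq_nonneg b)]
  have heq : t * ((1 + t) * a ^ 2 + 4 * A ^ 2 * (1 + 1 / t) * b ^ 2)
      = t * (1 + t) * a ^ 2 + 4 * A ^ 2 * (t + 1) * b ^ 2 := by
    field_simp
  refine le_of_mul_le_mul_left ?_ ht
  rw [heq]
  exact key'

private lemma volume_graph_zero (g : ℝ → ℝ) (hg : Measurable g) :
    volume {p : ℝ × ℝ | p.2 = g p.1} = 0 := by
  have hms : MeasurableSet {p : ℝ × ℝ | p.2 = g p.1} := measurableSet_graph hg
  rw [show (volume : Measure (ℝ × ℝ)) = (volume : Measure ℝ).prod volume from Measure.volume_eq_prod ℝ ℝ,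
    Measure.prod_apply hms]
  have h : ∀ x : ℝ, (Prod.mk x ⁻¹' {p : ℝ × ℝ | p.2 = g p.1}) = {g x} := by
    intro x; ext y; simp
  simp [h]

/-- The gradient estimate with free parameter `t > 0` in the proof of Lemma 3.1:
the `x₁`-partial derivative of the reflected extension
`Eφ(x) = φ(x₁, 2εγ(x₁/ε) − x₂)` on `Ω₀ \ Ω_ε` is controlled in `L²` by the
partial derivatives of `φ` on `Ω_ε`. -/
theorem reflection_gradient_estimate
    (γ : ℝ → ℝ) (hγ : ContDiff ℝ 1 γ) (hper : ∀ t, γ (t + 1) = γ t)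
    (hpos : ∀ t, 0 ≤ γ t)
    (A : ℝ) (hA : IsLUB (Set.range fun t => |deriv γ t|) A)
    (ε : ℝ) (hε : 0 < ε) (hεγ : ∀ t, 2 * ε * γ t ≤ 1)
    (Ωε : Set (ℝ × ℝ))
    (hΩε : Ωε = {x : ℝ × ℝ | 0 < x.1 ∧ x.1 < 1 ∧ ε * γ (x.1 / ε) < x.2 ∧ x.2 < 1})
    (Ω₀ : Set (ℝ × ℝ)) (hΩ₀ : Ω₀ = Set.Ioo (0:ℝ) 1 ×ˢ Set.Ioo (0:ℝ) 1)
    (φ : ℝ × ℝ → ℝ) (U : Set (ℝ × ℝ)) (hU : IsOpen U) (hUc : closure Ωε ⊆ U)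
    (hφ : ContDiffOn ℝ 1 φ U) :
    ∀ t > (0:ℝ),
      (∫ x in Ω₀ \ Ωε,
          (pd1 φ (x.1, 2 * ε * γ (x.1 / ε) - x.2) +
            2 * deriv γ (x.1 / ε) * pd2 φ (x.1, 2 * ε * γ (x.1 / ε) - x.2)) ^ 2) ≤
        (1 + t) * (∫ x in Ωε, (pd1 φ x) ^ 2) +
          4 * A ^ 2 * (1 + 1 / t) * ∫ x in Ωε, (pd2 φ x) ^ 2 := by
  intro t ht
  have hAb : ∀ s : ℝ, |deriv γ s| ≤ A := fun s => hA.1 ⟨s, rfl⟩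
  have hγc : Continuous γ := hγ.continuous
  have hγ'c : Continuous (deriv γ) := hγ.continuous_deriv le_rfl
  have hgc : Continuous fun s : ℝ => ε * γ (s / ε) :=
    continuous_const.mul (hγc.comp (continuous_id.div_const ε))
  have hcc : Continuous fun s : ℝ => 2 * ε * γ (s / ε) :=
    continuous_const.mul (hγc.comp (continuous_id.div_const ε))
  set R : ℝ × ℝ → ℝ × ℝ := fun x => (x.1, 2 * ε * γ (x.1 / ε) - x.2) with hRdef
  have hRc : Continuous R :=
    continuous_fst.prodMk ((hcc.comp continuous_fst).sub continuous_snd)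
  have hRR : ∀ x, R (R x) = x := by
    intro x
    simp only [hRdef]
    exact Prod.ext rfl (by ring)
  let e : ℝ × ℝ ≃ᵐ ℝ × ℝ :=
    { toFun := R, invFun := R, left_inv := hRR, right_inv := hRR,
      measurable_toFun := hRc.measurable, measurable_invFun := hRc.measurable }
  have hemb : MeasurableEmbedding R := e.measurableEmbedding
  have hmp : MeasurePreserving R (volume : Measure (ℝ × ℝ)) volume := by
    rw [Measure.volume_eq_prod]
    exact (MeasurePreserving.id volume).skew_product
      (f := id) (g := fun a y => 2 * ε * γ (a / ε) - y)
      (((hcc.comp continuous_fst).sub continuous_snd).measurable)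
      (ae_of_all _ fun a => (Measure.measurePreserving_sub_left volume (2 * ε * γ (a / ε))).map_eq)
  -- the set S
  set S : Set (ℝ × ℝ) := {x | 0 < x.1 ∧ x.1 < 1 ∧ 0 < x.2 ∧ x.2 < ε * γ (x.1 / ε)} with hS
  have hSm : MeasurableSet S := by
    have h : S = {x : ℝ × ℝ | 0 < x.1} ∩ ({x | x.1 < 1} ∩ ({x | 0 < x.2} ∩
        {x | x.2 < ε * γ (x.1 / ε)})) := rfl
    rw [h]
    exact (measurableSet_lt measurable_const measurable_fst).inter
      ((measurableSet_lt measurable_fst measurable_const).inter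
        ((measurableSet_lt measurable_const measurable_snd).inter
          (measurableSet_lt measurable_snd ((hgc.comp continuous_fst).measurable))))
  have hΩεm : MeasurableSet Ωε := by
    rw [hΩε]
    have h : {x : ℝ × ℝ | 0 < x.1 ∧ x.1 < 1 ∧ ε * γ (x.1 / ε) < x.2 ∧ x.2 < 1}
        = {x : ℝ × ℝ | 0 < x.1} ∩ ({x | x.1 < 1} ∩ ({x | ε * γ (x.1 / ε) < x.2} ∩
          {x | x.2 < 1})) := rfl
    rw [h]
    exact (measurableSet_lt measurable_const measurable_fst).inter
      ((measurableSet_lt measurable_fst measurable_const).inter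
        ((measurableSet_lt ((hgc.comp continuous_fst).measurable) measurable_snd).inter
          (measurableSet_lt measurable_snd measurable_const)))
  have hεγ' : ∀ s : ℝ, ε * γ s ≤ 1 / 2 := fun s => by have := hεγ s; linarith
  -- subsets
  have hSΩ : S ⊆ Ω₀ \ Ωε := by
    rintro x ⟨h1, h2, h3, h4⟩
    have h5 : ε * γ (x.1 / ε) ≤ 1 / 2 := hεγ' _
    constructor
    · rw [hΩ₀]
      exact ⟨⟨h1, h2⟩, ⟨h3, by linarith⟩⟩
    · rw [hΩε]
      rintro ⟨_, _, h6, _⟩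
      linarith
  have hdiff : (Ω₀ \ Ωε) \ S ⊆ {p : ℝ × ℝ | p.2 = ε * γ (p.1 / ε)} := by
    rintro x ⟨⟨hx0, hxε⟩, hxS⟩
    rw [hΩ₀] at hx0
    obtain ⟨⟨h1, h2⟩, h3, h4⟩ := hx0
    rw [hΩε] at hxε
    simp only [mem_setOf_eq] at hxε
    push_neg at hxε
    have h5 : x.2 ≤ ε * γ (x.1 / ε) := by
      by_contra h
      push_neg at h
      exact absurd (hxε h1 h2 h) (not_le.mpr h4)
    have h6 : ε * γ (x.1 / ε) ≤ x.2 := by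
      by_contra h
      push_neg at h
      exact hxS ⟨h1, h2, h3, h⟩
    exact le_antisymm h5 h6
  have hae : (Ω₀ \ Ωε : Set (ℝ × ℝ)) =ᵐ[volume] S := by
    rw [MeasureTheory.ae_eq_set]
    constructor
    · exact measure_mono_null hdiff (volume_graph_zero _ (hgc.measurable))
    · rw [Set.diff_eq_empty.mpr hSΩ]; exact measure_empty
  -- image subset
  have hRS : R '' S ⊆ Ωε := by
    rintro _ ⟨x, ⟨h1, h2, h3, h4⟩, rfl⟩
    rw [hΩε]
    have h5 := hεγ (x.1 / ε)
    refine ⟨h1, h2, ?_, ?_⟩ <;> · simp only [hRdef]; linarith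
  -- compactness / finiteness
  have hIcc : IsCompact (Set.Icc ((0:ℝ), (0:ℝ)) ((1:ℝ), (1:ℝ))) := isCompact_Icc
  have hΩεIcc : Ωε ⊆ Set.Icc ((0:ℝ), (0:ℝ)) ((1:ℝ), (1:ℝ)) := by
    rw [hΩε]
    rintro x ⟨h1, h2, h3, h4⟩
    have h0 : 0 ≤ ε * γ (x.1 / ε) := mul_nonneg hε.le (hpos _)
    simp only [Set.mem_Icc, Prod.le_def]
    norm_num
    exact ⟨⟨h1.le, by linarith⟩, h2.le, h4.le⟩
  have hΩ₀Icc : Ω₀ ⊆ Set.Icc ((0:ℝ), (0:ℝ)) ((1:ℝ), (1:ℝ)) := by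
    rw [hΩ₀]
    rintro x ⟨hx1, hx2⟩
    simp only [Set.mem_Icc, Prod.le_def]
    norm_num
    exact ⟨⟨hx1.1.le, hx2.1.le⟩, hx1.2.le, hx2.2.le⟩
  have hΩεfin : volume Ωε ≠ ⊤ := ((measure_mono hΩεIcc).trans_lt hIcc.measure_lt_top).ne
  have hSfin : volume S ≠ ⊤ :=
    ((measure_mono fun x hx => hΩ₀Icc (hSΩ hx).1).trans_lt hIcc.measure_lt_top).ne
  have hKcomp : IsCompact (closure Ωε) :=
    hIcc.of_isClosed_subset isClosed_closure (closure_minimal hΩεIcc hIcc.isClosed)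
  -- continuity and bounds of partial derivatives
  have hfc : ContinuousOn (fderiv ℝ φ) U := hφ.continuousOn_fderiv_of_isOpen hU le_rfl
  have hpd1c : ContinuousOn (pd1 φ) U := hfc.clm_apply continuousOn_const
  have hpd2c : ContinuousOn (pd2 φ) U := hfc.clm_apply continuousOn_const
  obtain ⟨C1, hC1⟩ := hKcomp.exists_bound_of_continuousOn (hpd1c.mono hUc)
  obtain ⟨C2, hC2⟩ := hKcomp.exists_bound_of_continuousOn (hpd2c.mono hUc)
  have hpd1m : Measurable (pd1 φ) := by
    unfold pd1; apply measurable_fderiv_apply_const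
  have hpd2m : Measurable (pd2 φ) := by
    unfold pd2; apply measurable_fderiv_apply_const
  -- integrability on Ωε
  have hsqbound : ∀ (ψ : ℝ × ℝ → ℝ) (C : ℝ) (x : ℝ × ℝ), ‖ψ x‖ ≤ C → ‖(ψ x) ^ 2‖ ≤ C ^ 2 := by
    intro ψ C x hx
    rw [Real.norm_eq_abs, abs_pow]
    rw [Real.norm_eq_abs] at hx
    exact pow_le_pow_left₀ (abs_nonneg _) hx 2
  have hint : ∀ (ψ : ℝ × ℝ → ℝ) (C : ℝ), Measurable ψ → (∀ x ∈ closure Ωε, ‖ψ x‖ ≤ C) →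
      IntegrableOn (fun x => (ψ x) ^ 2) Ωε := by
    intro ψ C hm hb
    refine Measure.integrableOn_of_bounded (M := C ^ 2) hΩεfin
      ((hm.pow_const 2).aestronglyMeasurable) ?_
    filter_upwards [ae_restrict_mem hΩεm] with x hx
    exact hsqbound ψ C x (hb x (subset_closure hx))
  have hf1int : IntegrableOn (fun x => (pd1 φ x) ^ 2) Ωε := hint _ C1 hpd1m hC1
  have hf2int : IntegrableOn (fun x => (pd2 φ x) ^ 2) Ωε := hint _ C2 hpd2m hC2
  -- integrability on S of the composed functions
  have hRmem : ∀ x ∈ S, R x ∈ closure Ωε := fun x hx => subset_closure (hRS ⟨x, hx, rfl⟩)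
  have hintS : ∀ (ψ : ℝ × ℝ → ℝ) (C : ℝ), Measurable ψ → (∀ x ∈ closure Ωε, ‖ψ x‖ ≤ C) →
      IntegrableOn (fun x => (ψ (R x)) ^ 2) S := by
    intro ψ C hm hb
    refine Measure.integrableOn_of_bounded (M := C ^ 2) hSfin
      (((hm.comp hRc.measurable).pow_const 2).aestronglyMeasurable) ?_
    filter_upwards [ae_restrict_mem hSm] with x hx
    exact hsqbound (fun y => ψ (R y)) C x (hb _ (hRmem x hx))
  have hg1int : IntegrableOn (fun x => (pd1 φ (R x)) ^ 2) S := hintS _ C1 hpd1m hC1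
  have hg2int : IntegrableOn (fun x => (pd2 φ (R x)) ^ 2) S := hintS _ C2 hpd2m hC2
  -- the main integrand
  set F : ℝ × ℝ → ℝ :=
    fun x => (pd1 φ (R x) + 2 * deriv γ (x.1 / ε) * pd2 φ (R x)) ^ 2 with hFdef
  have hFm : Measurable F := by
    refine Measurable.pow_const ?_ 2
    exact (hpd1m.comp hRc.measurable).add
      ((measurable_const.mul (hγ'c.measurable.comp (measurable_fst.div_const ε))).mul
        (hpd2m.comp hRc.measurable))
  have hA0 : (0 : ℝ) ≤ A := (abs_nonneg _).trans (hAb 0)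
  have hFint : IntegrableOn F S := by
    refine Measure.integrableOn_of_bounded (M := (C1 + 2 * A * C2) ^ 2) hSfin
      hFm.aestronglyMeasurable ?_
    filter_upwards [ae_restrict_mem hSm] with x hx
    have h1 : |pd1 φ (R x)| ≤ C1 := by
      have := hC1 _ (hRmem x hx); rwa [Real.norm_eq_abs] at this
    have h2 : |pd2 φ (R x)| ≤ C2 := by
      have := hC2 _ (hRmem x hx); rwa [Real.norm_eq_abs] at this
    have h3 : |deriv γ (x.1 / ε)| ≤ A := hAb _
    have habs : |pd1 φ (R x) + 2 * deriv γ (x.1 / ε) * pd2 φ (R x)| ≤ C1 + 2 * A * C2 := by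
      calc |pd1 φ (R x) + 2 * deriv γ (x.1 / ε) * pd2 φ (R x)|
          ≤ |pd1 φ (R x)| + |2 * deriv γ (x.1 / ε) * pd2 φ (R x)| := abs_add_le _ _
        _ ≤ C1 + 2 * A * C2 := by
            have : |2 * deriv γ (x.1 / ε) * pd2 φ (R x)|
                = 2 * |deriv γ (x.1 / ε)| * |pd2 φ (R x)| := by
              rw [abs_mul, abs_mul]; norm_num
            rw [this]
            have h4 : 2 * |deriv γ (x.1 / ε)| * |pd2 φ (R x)| ≤ 2 * A * C2 := by
              apply mul_le_mul (by linarith) h2 (abs_nonneg _) (by linarith)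
            linarith
    simp only [hFdef]
    rw [Real.norm_eq_abs, abs_pow]
    exact pow_le_pow_left₀ (abs_nonneg _) habs 2
  -- the comparison function
  set G : ℝ × ℝ → ℝ := fun x =>
    (1 + t) * (pd1 φ (R x)) ^ 2 + 4 * A ^ 2 * (1 + 1 / t) * (pd2 φ (R x)) ^ 2 with hGdef
  have hGint : IntegrableOn G S := (hg1int.const_mul _).add (hg2int.const_mul _)
  have hpt : ∀ x ∈ S, F x ≤ G x := by
    intro x hx
    exact key_ineq _ _ _ A t ht (hAb _)
  have h1t : (0:ℝ) ≤ 1 + 1 / t := by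
    have := one_div_pos.mpr ht; linarith
  have hc2 : (0:ℝ) ≤ 4 * A ^ 2 * (1 + 1 / t) := by positivity
  have hc1 : (0:ℝ) ≤ 1 + t := by linarith
  -- image integrals
  have him1 : ∫ x in S, (pd1 φ (R x)) ^ 2 ≤ ∫ x in Ωε, (pd1 φ x) ^ 2 := by
    rw [← hmp.setIntegral_image_emb hemb (fun y => (pd1 φ y) ^ 2) S]
    exact setIntegral_mono_set hf1int (ae_of_all _ fun y => sq_nonneg _)
      (HasSubset.Subset.eventuallyLE hRS)
  have him2 : ∫ x in S, (pd2 φ (R x)) ^ 2 ≤ ∫ x in Ωε, (pd2 φ x) ^ 2 := by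
    rw [← hmp.setIntegral_image_emb hemb (fun y => (pd2 φ y) ^ 2) S]
    exact setIntegral_mono_set hf2int (ae_of_all _ fun y => sq_nonneg _)
      (HasSubset.Subset.eventuallyLE hRS)
  have main : (∫ x in Ω₀ \ Ωε, F x)
      ≤ (1 + t) * (∫ x in Ωε, (pd1 φ x) ^ 2) +
          4 * A ^ 2 * (1 + 1 / t) * ∫ x in Ωε, (pd2 φ x) ^ 2 := by
    calc (∫ x in Ω₀ \ Ωε, F x) = ∫ x in S, F x := setIntegral_congr_set hae
      _ ≤ ∫ x in S, G x := setIntegral_mono_on hFint hGint hSm hpt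
      _ = (1 + t) * (∫ x in S, (pd1 φ (R x)) ^ 2) +
            4 * A ^ 2 * (1 + 1 / t) * ∫ x in S, (pd2 φ (R x)) ^ 2 := by
          simp only [hGdef]
          rw [integral_add (hg1int.const_mul _) (hg2int.const_mul _),
            integral_const_mul, integral_const_mul]
      _ ≤ (1 + t) * (∫ x in Ωε, (pd1 φ x) ^ 2) +
            4 * A ^ 2 * (1 + 1 / t) * ∫ x in Ωε, (pd2 φ x) ^ 2 :=
          add_le_add (mul_le_mul_of_nonneg_left him1 hc1)
            (mul_le_mul_of_nonneg_left him2 hc2)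
  exact main
end

section
/- Let v : ℝ² → ℝ be C¹ on an open neighborhood of the closed unit square [0,1]², and let 0 < ε ≤ 1. Then ∫₀¹ ∫₀^ε v(x₁,x₂)² dx₂ dx₁ ≤ 2ε · ∫_{[0,1]²} (v(x)² + (∂₂v(x))²) dx. -/
open MeasureTheory Set

/-!
On a vertical segment, the fundamental theorem of calculus for `g²` and `2|g g'| ≤ g² + g'²` give
`g(x)² ≤ g(t)² + ∫₀¹ (g² + g'²)` for all `x, t ∈ [0, 1]`; averaging over `t` yields
`g(x)² ≤ 2 ∫₀¹ (g² + g'²)`. Integrating this over `x ∈ [0, ε]`, and then over the horizontal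
variable, gives the estimate by Fubini.
-/

section OneDimensional

variable {f g g' h : ℝ → ℝ} {a b t x : ℝ}

lemma abs_intervalIntegral_le_of_abs_le_of_mem_Icc (hfh : ∀ s ∈ Icc a b, |f s| ≤ h s)
    (hh : IntervalIntegrable h volume a b) (ht : t ∈ Icc a b) (hx : x ∈ Icc a b) :
    |∫ s in t..x, f s| ≤ ∫ s in a..b, h s := by
  wlog htx : t ≤ x generalizing t x
  · rw [intervalIntegral.integral_symm, abs_neg]
    exact this hx ht (le_of_not_ge htx)
  calc |∫ s in t..x, f s|
      ≤ ∫ s in t..x, h s := by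
        simpa only [Real.norm_eq_abs] using
          intervalIntegral.norm_integral_le_of_norm_le (f := f) htx
            (ae_of_all _ fun s hs => hfh s ⟨ht.1.trans hs.1.le, hs.2.trans hx.2⟩)
            (hh.mono_set (by rw [uIcc_of_le htx, uIcc_of_le (ht.1.trans ht.2)]
                             exact Icc_subset_Icc ht.1 hx.2))
    _ ≤ ∫ s in a..b, h s :=
        intervalIntegral.integral_mono_interval ht.1 htx hx.2
          ((ae_restrict_iff' measurableSet_Ioc).2 <| ae_of_all _ fun s hs =>
            (abs_nonneg _).trans (hfh s (Ioc_subset_Icc_self hs)))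
          hh

lemma sq_le_sq_add_integral_sq_add_sq_deriv (hab : a ≤ b)
    (hg : ∀ s ∈ Icc a b, HasDerivAt g (g' s) s) (hg' : ContinuousOn g' (Icc a b))
    (hx : x ∈ Icc a b) (ht : t ∈ Icc a b) :
    g x ^ 2 ≤ g t ^ 2 + ∫ s in a..b, (g s ^ 2 + g' s ^ 2) := by
  have hgc : ContinuousOn g (Icc a b) := fun s hs => (hg s hs).continuousAt.continuousWithinAt
  have hsub : uIcc t x ⊆ Icc a b := uIcc_subset_Icc ht hx
  have ftc : ∫ s in t..x, 2 * g s * g' s = g x ^ 2 - g t ^ 2 := by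
    refine intervalIntegral.integral_eq_sub_of_hasDerivAt (f := fun s => g s ^ 2) (fun s hs => ?_)
      (((continuousOn_const.mul hgc).mul hg').mono hsub).intervalIntegrable
    simpa using (hg s (hsub hs)).fun_pow 2
  have hbound : |∫ s in t..x, 2 * g s * g' s| ≤ ∫ s in a..b, (g s ^ 2 + g' s ^ 2) :=
    abs_intervalIntegral_le_of_abs_le_of_mem_Icc (h := fun s => g s ^ 2 + g' s ^ 2)
      (fun s _ => by rw [abs_mul, abs_mul, abs_two, ← sq_abs (g s), ← sq_abs (g' s)]
                     exact two_mul_le_add_sq _ _)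
      (((hgc.pow 2).add (hg'.pow 2)).intervalIntegrable_of_Icc hab) ht hx
  linarith [le_abs_self (∫ s in t..x, 2 * g s * g' s)]

lemma mul_sq_le_integral_sq_add_sq_deriv (hab : a ≤ b)
    (hg : ∀ s ∈ Icc a b, HasDerivAt g (g' s) s) (hg' : ContinuousOn g' (Icc a b))
    (hx : x ∈ Icc a b) :
    (b - a) * g x ^ 2 ≤ (b - a + 1) * ∫ s in a..b, (g s ^ 2 + g' s ^ 2) := by
  have hgc : ContinuousOn g (Icc a b) := fun s hs => (hg s hs).continuousAt.continuousWithinAt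
  set I := ∫ s in a..b, (g s ^ 2 + g' s ^ 2)
  have hg2 : IntervalIntegrable (fun s => g s ^ 2) volume a b :=
    (hgc.pow 2).intervalIntegrable_of_Icc hab
  have haverage : (b - a) * g x ^ 2 ≤ (∫ t in a..b, g t ^ 2) + (b - a) * I := by
    have := intervalIntegral.integral_mono_on hab intervalIntegrable_const
      (hg2.add intervalIntegrable_const)
      (fun t ht => sq_le_sq_add_integral_sq_add_sq_deriv hab hg hg' hx ht)
    simpa [intervalIntegral.integral_add hg2 intervalIntegrable_const] using this
  have hI : ∫ t in a..b, g t ^ 2 ≤ I :=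
    intervalIntegral.integral_mono_on hab hg2
      (((hgc.pow 2).add (hg'.pow 2)).intervalIntegrable_of_Icc hab)
      (fun s _ => le_add_of_nonneg_right (sq_nonneg _))
  linarith

lemma integral_sq_le_two_mul_integral_sq_add_sq_deriv {ε : ℝ}
    (hg : ∀ s ∈ Icc 0 1, HasDerivAt g (g' s) s) (hg' : ContinuousOn g' (Icc 0 1))
    (hε0 : 0 ≤ ε) (hε1 : ε ≤ 1) :
    ∫ s in 0..ε, g s ^ 2 ≤ 2 * ε * ∫ s in 0..1, (g s ^ 2 + g' s ^ 2) := by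
  have hpointwise : ∀ s ∈ uIoc 0 ε, ‖g s ^ 2‖ ≤ 2 * ∫ s in 0..1, (g s ^ 2 + g' s ^ 2) := by
    intro s hs
    rw [uIoc_of_le hε0] at hs
    have := mul_sq_le_integral_sq_add_sq_deriv zero_le_one hg hg' ⟨hs.1.le, hs.2.trans hε1⟩
    rw [Real.norm_of_nonneg (sq_nonneg _)]
    linarith
  calc ∫ s in 0..ε, g s ^ 2
      ≤ ‖∫ s in 0..ε, g s ^ 2‖ := Real.le_norm_self _
    _ ≤ (2 * ∫ s in 0..1, (g s ^ 2 + g' s ^ 2)) * |ε - 0| :=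
        intervalIntegral.norm_integral_le_of_norm_le_const hpointwise
    _ = 2 * ε * ∫ s in 0..1, (g s ^ 2 + g' s ^ 2) := by
        rw [sub_zero, abs_of_nonneg hε0]; ring

end OneDimensional

section Rectangle

variable {F : ℝ × ℝ → ℝ} {a b c d : ℝ}

lemma intervalIntegral_eq_setIntegral_Icc {f : ℝ → ℝ} (hcd : c ≤ d) :
    ∫ y in c..d, f y = ∫ y in Icc c d, f y := by
  rw [intervalIntegral.integral_of_le hcd, integral_Icc_eq_integral_Ioc]

lemma MeasureTheory.IntegrableOn.intervalIntegrable_intervalIntegral_prod (hab : a ≤ b)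
    (hcd : c ≤ d) (hF : IntegrableOn F (Icc a b ×ˢ Icc c d)) :
    IntervalIntegrable (fun x => ∫ y in c..d, F (x, y)) volume a b := by
  have hprod : Integrable F ((volume.restrict (Icc a b)).prod (volume.restrict (Icc c d))) := by
    rwa [Measure.prod_restrict, ← Measure.volume_eq_prod]
  simp only [intervalIntegral_eq_setIntegral_Icc hcd]
  exact (intervalIntegrable_iff_integrableOn_Icc_of_le hab).2 hprod.integral_prod_left

lemma setIntegral_Icc_prod_Icc_eq_intervalIntegral (hab : a ≤ b) (hcd : c ≤ d)
    (hF : IntegrableOn F (Icc a b ×ˢ Icc c d)) :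
    ∫ z in Icc a b ×ˢ Icc c d, F z = ∫ x in a..b, ∫ y in c..d, F (x, y) := by
  rw [Measure.volume_eq_prod, setIntegral_prod F (by rwa [← Measure.volume_eq_prod]),
    intervalIntegral.integral_of_le hab, integral_Icc_eq_integral_Ioc]
  simp only [intervalIntegral_eq_setIntegral_Icc hcd]

end Rectangle

lemma DifferentiableAt.hasDerivAt_pd2 {u : ℝ × ℝ → ℝ} {x₁ s : ℝ}
    (hu : DifferentiableAt ℝ u (x₁, s)) :
    HasDerivAt (fun t => u (x₁, t)) (pd2 u (x₁, s)) s := by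
  have hline : HasDerivAt (fun t : ℝ => (x₁, t)) (0, 1) s :=
    (hasDerivAt_const s x₁).prodMk (hasDerivAt_id s)
  exact hu.hasFDerivAt.comp_hasDerivAt s hline

lemma ContDiffOn.continuousOn_pd2 {u : ℝ × ℝ → ℝ} {U : Set (ℝ × ℝ)} (hU : IsOpen U)
    (hu : ContDiffOn ℝ 1 u U) : ContinuousOn (pd2 u) U :=
  (hu.continuousOn_fderiv_of_isOpen hU le_rfl).clm_apply continuousOn_const

/-- A classical-derivative version of Lemma 3.2 of the paper (with κ = μ = 1):
the `L²` norm of a function over a boundary strip of width `ε` in the unit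
square is controlled by `√ε` times its `H¹` norm. -/
theorem strip_estimate
    (v : ℝ × ℝ → ℝ) (U : Set (ℝ × ℝ)) (hU : IsOpen U)
    (hUc : Set.Icc (0:ℝ) 1 ×ˢ Set.Icc (0:ℝ) 1 ⊆ U)
    (hv : ContDiffOn ℝ 1 v U)
    (ε : ℝ) (hε0 : 0 < ε) (hε1 : ε ≤ 1) :
    (∫ x₁ in (0:ℝ)..1, ∫ x₂ in (0:ℝ)..ε, (v (x₁, x₂)) ^ 2) ≤
      2 * ε * ∫ x in Set.Icc (0:ℝ) 1 ×ˢ Set.Icc (0:ℝ) 1,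
        ((v x) ^ 2 + (pd2 v x) ^ 2) := by
  have hvc : ContinuousOn v U := hv.continuousOn
  have hdc : ContinuousOn (pd2 v) U := hv.continuousOn_pd2 hU
  have hline : ∀ x₁ ∈ Icc (0:ℝ) 1, MapsTo (fun t => (x₁, t)) (Icc 0 1) U :=
    fun x₁ hx₁ t ht => hUc ⟨hx₁, ht⟩
  have hslice : ∀ x₁ ∈ Icc (0:ℝ) 1, ∫ x₂ in (0:ℝ)..ε, v (x₁, x₂) ^ 2 ≤
      2 * ε * ∫ x₂ in (0:ℝ)..1, (v (x₁, x₂) ^ 2 + pd2 v (x₁, x₂) ^ 2) := fun x₁ hx₁ =>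
    integral_sq_le_two_mul_integral_sq_add_sq_deriv
      (fun s hs => ((hv.differentiableOn one_ne_zero).differentiableAt
        (hU.mem_nhds (hline x₁ hx₁ hs))).hasDerivAt_pd2)
      (hdc.comp (by fun_prop) (hline x₁ hx₁)) hε0.le hε1
  have hstrip : IntegrableOn (fun x => v x ^ 2) (Icc 0 1 ×ˢ Icc 0 ε) :=
    ((hvc.mono ((prod_mono_right (Icc_subset_Icc_right hε1)).trans hUc)).pow 2)
      |>.integrableOn_compact (isCompact_Icc.prod isCompact_Icc)
  have hsquare : IntegrableOn (fun x => v x ^ 2 + pd2 v x ^ 2) (Icc 0 1 ×ˢ Icc 0 1) :=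
    (((hvc.mono hUc).pow 2).add ((hdc.mono hUc).pow 2)).integrableOn_compact
      (isCompact_Icc.prod isCompact_Icc)
  rw [setIntegral_Icc_prod_Icc_eq_intervalIntegral zero_le_one zero_le_one hsquare,
    ← intervalIntegral.integral_const_mul]
  exact intervalIntegral.integral_mono_on zero_le_one
    (hstrip.intervalIntegrable_intervalIntegral_prod zero_le_one hε0.le)
    ((hsquare.intervalIntegrable_intervalIntegral_prod zero_le_one zero_le_one).const_mul _) hslice
end

section
/- Let p : ℝ → ℝ be continuous and 1-periodic with mean ⟨p⟩ := ∫₀¹ p(t) dt, let N be a positive integer, set ε := 1/N, and let ψ : [0,1] → ℝ be C¹. Then |∫₀¹ (p(x/ε) − ⟨p⟩) ψ(x) dx| ≤ ε · (∫₀¹ p(t)² dt)^{1/2} · (∫₀¹ ψ′(x)² dx)^{1/2}. -/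
open MeasureTheory Set

/-! Write `p(x/ε) - ⟨p⟩ = q(N x)` with `q` 1-periodic of mean zero. The primitive `Q` of `q` is
then 1-periodic too, so `F x = Q(N x) / N` is a primitive of `q(N ·)` vanishing at `0` and `1`, and
integrating by parts turns the pairing into `-∫₀¹ F ψ'`. By periodicity `∫₀¹ F² = N⁻² ∫₀¹ Q²`;
Cauchy–Schwarz gives `∫₀¹ Q² ≤ ∫₀¹ q²`, and `∫₀¹ q² ≤ ∫₀¹ p²` is variance ≤ second moment. One more
Cauchy–Schwarz finishes. -/

theorem MeasureTheory.abs_integral_mul_le_sqrt_mul_sqrt {α : Type*} [MeasurableSpace α]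
    {μ : Measure α} {f g : α → ℝ} (hf : MemLp f 2 μ) (hg : MemLp g 2 μ) :
    |∫ x, f x * g x ∂μ| ≤ √(∫ x, f x ^ 2 ∂μ) * √(∫ x, g x ^ 2 ∂μ) := by
  have holder := integral_mul_norm_le_Lp_mul_Lq Real.HolderConjugate.two_two
    (by simpa using hf) (by simpa using hg)
  simp only [Real.norm_eq_abs, Real.rpow_two, sq_abs] at holder
  rw [Real.sqrt_eq_rpow, Real.sqrt_eq_rpow]
  calc |∫ x, f x * g x ∂μ| ≤ ∫ x, |f x| * |g x| ∂μ := by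
        simpa only [← abs_mul] using abs_integral_le_integral_abs
    _ ≤ _ := holder

theorem ContinuousOn.memLp_two_restrict_Ioc {f : ℝ → ℝ} {a b : ℝ}
    (hf : ContinuousOn f (Icc a b)) : MemLp f 2 (volume.restrict (Ioc a b)) :=
  (memLp_two_iff_integrable_sq ((hf.mono Ioc_subset_Icc_self).aestronglyMeasurable
    measurableSet_Ioc)).mpr ((hf.pow 2).integrableOn_Icc.mono_set Ioc_subset_Icc_self)

namespace intervalIntegral

theorem abs_integral_mul_le_sqrt_mul_sqrt {f g : ℝ → ℝ} {a b : ℝ} (hab : a ≤ b)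
    (hf : ContinuousOn f (Icc a b)) (hg : ContinuousOn g (Icc a b)) :
    |∫ x in a..b, f x * g x| ≤ √(∫ x in a..b, f x ^ 2) * √(∫ x in a..b, g x ^ 2) := by
  simp only [integral_of_le hab]
  exact MeasureTheory.abs_integral_mul_le_sqrt_mul_sqrt hf.memLp_two_restrict_Ioc
    hg.memLp_two_restrict_Ioc

theorem sq_integral_le_mul_integral_sq {f : ℝ → ℝ} {a b : ℝ} (hab : a ≤ b)
    (hf : ContinuousOn f (Icc a b)) :
    (∫ x in a..b, f x) ^ 2 ≤ (b - a) * ∫ x in a..b, f x ^ 2 := by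
  have cs := abs_integral_mul_le_sqrt_mul_sqrt hab hf continuousOn_const (g := fun _ ↦ 1)
  have hnonneg : 0 ≤ ∫ x in a..b, f x ^ 2 := integral_nonneg hab fun x _ ↦ sq_nonneg (f x)
  simp only [mul_one, one_pow, integral_const, smul_eq_mul] at cs
  calc (∫ x in a..b, f x) ^ 2 ≤ (√(∫ x in a..b, f x ^ 2) * √(b - a)) ^ 2 := by
        simpa only [sq_abs] using pow_le_pow_left₀ (abs_nonneg _) cs 2
    _ = (b - a) * ∫ x in a..b, f x ^ 2 := by
        rw [mul_pow, Real.sq_sqrt hnonneg, Real.sq_sqrt (sub_nonneg.mpr hab), mul_comm]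

theorem integral_sq_primitive_le {f : ℝ → ℝ} {a b : ℝ} (hab : a ≤ b) (hf : Continuous f) :
    ∫ x in a..b, (∫ t in a..x, f t) ^ 2 ≤ (b - a) ^ 2 * ∫ x in a..b, f x ^ 2 := by
  have pointwise : ∀ x ∈ Icc a b, (∫ t in a..x, f t) ^ 2 ≤ (b - a) * ∫ t in a..b, f t ^ 2 := by
    rintro x ⟨hax, hxb⟩
    calc (∫ t in a..x, f t) ^ 2 ≤ (x - a) * ∫ t in a..x, f t ^ 2 :=
          sq_integral_le_mul_integral_sq hax hf.continuousOn
      _ ≤ (b - a) * ∫ t in a..b, f t ^ 2 := by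
          gcongr
          · exact integral_nonneg hax fun t _ ↦ sq_nonneg (f t)
          · exact integral_mono_interval le_rfl hax hxb (.of_forall fun t ↦ sq_nonneg (f t))
              ((hf.pow 2).intervalIntegrable a b)
  calc ∫ x in a..b, (∫ t in a..x, f t) ^ 2
      ≤ ∫ _ in a..b, (b - a) * ∫ t in a..b, f t ^ 2 :=
        integral_mono_on hab
          (((continuous_primitive (hf.intervalIntegrable · ·) a).pow 2).intervalIntegrable a b)
          intervalIntegrable_const pointwise
    _ = (b - a) ^ 2 * ∫ x in a..b, f x ^ 2 := by rw [integral_const, smul_eq_mul]; ring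

theorem integral_sq_sub_integral_le_integral_sq {f : ℝ → ℝ}
    (hf : AEStronglyMeasurable f (volume.restrict (Ioc 0 1))) :
    ∫ x in (0:ℝ)..1, (f x - ∫ t in (0:ℝ)..1, f t) ^ 2 ≤ ∫ x in (0:ℝ)..1, f x ^ 2 := by
  have : IsProbabilityMeasure (volume.restrict (Ioc (0:ℝ) 1)) := ⟨by simp⟩
  simp only [integral_of_le zero_le_one]
  rw [← ProbabilityTheory.variance_eq_integral hf.aemeasurable]
  exact ProbabilityTheory.variance_le_expectation_sq hf

theorem integral_mul_eq_neg_integral_mul_derivWithin {F f ψ : ℝ → ℝ} {a b : ℝ} (hab : a < b)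
    (hF : ∀ x, HasDerivAt F (f x) x) (hf : Continuous f) (hψ : ContDiffOn ℝ 1 ψ (Icc a b))
    (hFa : F a = 0) (hFb : F b = 0) :
    ∫ x in a..b, f x * ψ x = -∫ x in a..b, F x * derivWithin ψ (Icc a b) x := by
  have hIcc : uIcc a b = Icc a b := uIcc_of_le hab.le
  have hψ' : ContinuousOn (derivWithin ψ (Icc a b)) (Icc a b) :=
    hψ.continuousOn_derivWithin (uniqueDiffOn_Icc hab) le_rfl
  have hψψ' : ∀ x ∈ uIcc a b, HasDerivWithinAt ψ (derivWithin ψ (Icc a b) x) (uIcc a b) x := by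
    rw [hIcc]
    exact fun x hx ↦ (hψ.differentiableOn one_ne_zero x hx).hasDerivWithinAt
  rw [integral_mul_deriv_eq_deriv_mul_of_hasDerivWithinAt (fun x _ ↦ (hF x).hasDerivWithinAt)
    hψψ' (hf.intervalIntegrable a b) (hψ'.intervalIntegrable_of_Icc hab.le), hFa, hFb]
  ring

end intervalIntegral

namespace Function.Periodic

variable {E : Type*} [NormedAddCommGroup E] [NormedSpace ℝ E] {f : ℝ → E} {T : ℝ}

theorem intervalIntegral_comp_nat_mul (hf : Periodic f T)
    (hint : ∀ t₁ t₂, IntervalIntegrable f volume t₁ t₂) {N : ℕ} (hN : N ≠ 0) :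
    ∫ x in (0:ℝ)..T, f (N * x) = ∫ x in (0:ℝ)..T, f x := by
  have hN' : (N : ℝ) ≠ 0 := Nat.cast_ne_zero.mpr hN
  have := hf.intervalIntegral_add_zsmul_eq N 0 hint
  simp only [zero_add, natCast_zsmul, nsmul_eq_mul] at this
  rw [intervalIntegral.integral_comp_mul_left f hN', mul_zero, this, ← Nat.cast_smul_eq_nsmul ℝ,
    smul_smul, inv_mul_cancel₀ hN', one_smul]

theorem primitive_of_integral_eq_zero (hf : Periodic f T)
    (hint : ∀ t₁ t₂, IntervalIntegrable f volume t₁ t₂) (hzero : ∫ x in (0:ℝ)..T, f x = 0)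
    (a : ℝ) : Periodic (fun x ↦ ∫ t in a..x, f t) T := fun x ↦ by
  simp only [hf.intervalIntegral_add_eq_add a x hint, hf.intervalIntegral_add_eq a 0, zero_add,
    hzero, add_zero]

end Function.Periodic

section MeanZeroPeriodic

variable {q : ℝ → ℝ} {N : ℕ}

theorem integral_sq_primitive_comp_nat_mul_le (hq : Continuous q) (hq_per : Function.Periodic q 1)
    (hq_mean : ∫ t in (0:ℝ)..1, q t = 0) (hN : N ≠ 0) :
    ∫ x in (0:ℝ)..1, (∫ t in (0:ℝ)..N * x, q t) ^ 2 ≤ ∫ t in (0:ℝ)..1, q t ^ 2 := by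
  have hQsq_per : Function.Periodic (fun x ↦ (∫ t in (0:ℝ)..x, q t) ^ 2) 1 :=
    (hq_per.primitive_of_integral_eq_zero hq.intervalIntegrable hq_mean 0).comp (· ^ 2)
  rw [hQsq_per.intervalIntegral_comp_nat_mul
    ((intervalIntegral.continuous_primitive hq.intervalIntegrable 0).pow 2).intervalIntegrable hN]
  simpa using intervalIntegral.integral_sq_primitive_le zero_le_one hq

theorem abs_integral_comp_nat_mul_mul_le {ψ : ℝ → ℝ} (hq : Continuous q)
    (hq_per : Function.Periodic q 1) (hq_mean : ∫ t in (0:ℝ)..1, q t = 0) (hN : N ≠ 0)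
    (hψ : ContDiffOn ℝ 1 ψ (Icc 0 1)) :
    |∫ x in (0:ℝ)..1, q (N * x) * ψ x| ≤
      (N : ℝ)⁻¹ * √(∫ t in (0:ℝ)..1, q t ^ 2) *
        √(∫ x in (0:ℝ)..1, derivWithin ψ (Icc 0 1) x ^ 2) := by
  have hN' : (N : ℝ) ≠ 0 := Nat.cast_ne_zero.mpr hN
  set Q : ℝ → ℝ := fun x ↦ ∫ t in (0:ℝ)..x, q t
  set F : ℝ → ℝ := fun x ↦ (N : ℝ)⁻¹ * Q (N * x)
  have hF : ∀ x, HasDerivAt F (q (N * x)) x := fun x ↦ by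
    have h := (((hq.integral_hasStrictDerivAt 0 (N * x)).hasDerivAt.comp x
      ((hasDerivAt_id x).const_mul (N : ℝ))).const_mul (N : ℝ)⁻¹)
    rwa [mul_one, mul_comm, mul_assoc, mul_inv_cancel₀ hN', mul_one] at h
  have hF1 : F 1 = 0 := by
    have hQN := (hq_per.primitive_of_integral_eq_zero hq.intervalIntegrable hq_mean 0).nat_mul_eq N
    rw [mul_one] at hQN
    simp [F, Q, hQN]
  have hFsq : ∫ x in (0:ℝ)..1, F x ^ 2 ≤ ((N : ℝ)⁻¹) ^ 2 * ∫ t in (0:ℝ)..1, q t ^ 2 := by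
    simp only [F, mul_pow, intervalIntegral.integral_const_mul]
    gcongr
    exact integral_sq_primitive_comp_nat_mul_le hq hq_per hq_mean hN
  calc |∫ x in (0:ℝ)..1, q (N * x) * ψ x|
      = |∫ x in (0:ℝ)..1, F x * derivWithin ψ (Icc 0 1) x| := by
        rw [intervalIntegral.integral_mul_eq_neg_integral_mul_derivWithin zero_lt_one hF
          (by fun_prop) hψ (by simp [F, Q]) hF1, abs_neg]
    _ ≤ √(∫ x in (0:ℝ)..1, F x ^ 2) * √(∫ x in (0:ℝ)..1, derivWithin ψ (Icc 0 1) x ^ 2) :=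
        intervalIntegral.abs_integral_mul_le_sqrt_mul_sqrt zero_le_one (by fun_prop)
          (hψ.continuousOn_derivWithin (uniqueDiffOn_Icc zero_lt_one) le_rfl)
    _ ≤ (N : ℝ)⁻¹ * √(∫ t in (0:ℝ)..1, q t ^ 2) *
          √(∫ x in (0:ℝ)..1, derivWithin ψ (Icc 0 1) x ^ 2) := by
        gcongr
        calc √(∫ x in (0:ℝ)..1, F x ^ 2) ≤ √(((N : ℝ)⁻¹) ^ 2 * ∫ t in (0:ℝ)..1, q t ^ 2) :=
              Real.sqrt_le_sqrt hFsq
          _ = (N : ℝ)⁻¹ * √(∫ t in (0:ℝ)..1, q t ^ 2) := by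
              rw [Real.sqrt_mul (sq_nonneg _), Real.sqrt_sq (by positivity)]

end MeanZeroPeriodic

/-- The oscillation-averaging estimate in the proof of Lemma 3.3 of the paper:
for a continuous `1`-periodic `p` with mean `⟨p⟩` and `ε = 1/N`, the pairing of
the oscillation `p(x/ε) − ⟨p⟩` against a `C¹` test function `ψ` on `[0,1]` is
of order `ε`. -/
theorem oscillation_averaging_estimate
    (p : ℝ → ℝ) (hp : Continuous p) (hper : ∀ t, p (t + 1) = p t)
    (N : ℕ) (hN : 0 < N) (ε : ℝ) (hε : ε = 1 / (N : ℝ))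
    (ψ : ℝ → ℝ) (hψ : ContDiffOn ℝ 1 ψ (Set.Icc (0:ℝ) 1)) :
    |∫ x in (0:ℝ)..1, (p (x / ε) - ∫ t in (0:ℝ)..1, p t) * ψ x| ≤
      ε * Real.sqrt (∫ t in (0:ℝ)..1, (p t) ^ 2) *
        Real.sqrt (∫ x in (0:ℝ)..1, (derivWithin ψ (Set.Icc (0:ℝ) 1) x) ^ 2) := by
  set q : ℝ → ℝ := fun t ↦ p t - ∫ t in (0:ℝ)..1, p t
  have hq_per : Function.Periodic q 1 := fun t ↦ by simp only [q, hper]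
  have hq_mean : ∫ t in (0:ℝ)..1, q t = 0 := by
    simp [q, intervalIntegral.integral_sub (hp.intervalIntegrable 0 1) intervalIntegrable_const]
  have hq_sq : ∫ t in (0:ℝ)..1, q t ^ 2 ≤ ∫ t in (0:ℝ)..1, p t ^ 2 :=
    intervalIntegral.integral_sq_sub_integral_le_integral_sq hp.aestronglyMeasurable
  have hdiv : ∀ x, x / ε = N * x := fun x ↦ by rw [hε]; field_simp
  simp only [hdiv]
  calc |∫ x in (0:ℝ)..1, q (N * x) * ψ x|
      ≤ (N : ℝ)⁻¹ * √(∫ t in (0:ℝ)..1, q t ^ 2) *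
          √(∫ x in (0:ℝ)..1, derivWithin ψ (Icc 0 1) x ^ 2) :=
        abs_integral_comp_nat_mul_mul_le (hp.sub continuous_const) hq_per hq_mean hN.ne' hψ
    _ ≤ _ := by rw [hε, one_div]; gcongr
end

section
/- Let γ : ℝ → ℝ be continuously differentiable, 1-periodic, with γ(t) ≥ 0 for all t and A := sup_t |γ′(t)| < ∞, and let g : ℝ → ℝ be continuous and 1-periodic. Define p(t) := g(t)·√(1 + γ′(t)²) and ⟨p⟩ := ∫₀¹ p(t) dt. Then there exists a constant C > 0 depending only on A and sup_t γ(t) such that for every positive integer N with ε := 1/N satisfying ε·sup_t γ(t) ≤ 1, and every φ : ℝ² → ℝ that is C¹ on an open neighborhood of [0,1]²: |∫₀¹ p(x₁/ε)·φ(x₁, εγ(x₁/ε)) dx₁ − ⟨p⟩·∫₀¹ φ(x₁, 0) dx₁| ≤ C√ε · (∫₀¹ g(x₁/ε)²·√(1+γ′(x₁/ε)²) dx₁)^{1/2} · (∫_{(0,1)²} (φ² + ‖∇φ‖²) dx)^{1/2}. -/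
/-!
Write `p_ε x = p (x / ε)` with `p = g √(1 + γ'²)`. The difference splits as
`∫ p_ε (φ(x, εγ(x/ε)) - φ(x, 0)) + ∫ q φ(x, 0)` with `q = p_ε - ⟨p⟩`.
The rough boundary lies in the strip `0 ≤ y ≤ ε sup γ`, so the fundamental theorem of calculus in
`y` and Cauchy–Schwarz bound the first term by `√(ε sup γ) ‖p_ε‖ ‖∂₂φ‖`.
For the second term, `q` is `ε`-periodic with mean zero, hence its primitive `Q` is `ε`-periodic
and `‖Q‖ ≤ ε ‖q‖`. The trace of `φ` on `y = 0` is not controlled by the `H¹` norm, so we pass to a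
line `y = s` with `s < ε` on which `∫ (∂₁φ)² ≤ ε⁻¹ ∬ (∂₁φ)²` (such a line exists by averaging),
integrate by parts against `Q` there, and pay `‖φ(·, s) - φ(·, 0)‖ ≤ √ε ‖∂₂φ‖` for the move.
-/

open MeasureTheory Set

theorem sq_integral_mul_le {α : Type*} [MeasurableSpace α] {μ : Measure α} {f g : α → ℝ}
    (hf : MemLp f 2 μ) (hg : MemLp g 2 μ) :
    (∫ a, f a * g a ∂μ) ^ 2 ≤ (∫ a, f a ^ 2 ∂μ) * ∫ a, g a ^ 2 ∂μ := by
  have h2 : (2 : ENNReal) = ENNReal.ofReal 2 := by norm_num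
  have holder := integral_mul_le_Lp_mul_Lq_of_nonneg (μ := μ) Real.HolderConjugate.two_two
    (ae_of_all μ fun a => abs_nonneg (f a)) (ae_of_all μ fun a => abs_nonneg (g a))
    (h2 ▸ hf.abs) (h2 ▸ hg.abs)
  simp only [← Real.sqrt_eq_rpow, Real.rpow_two, sq_abs] at holder
  calc (∫ a, f a * g a ∂μ) ^ 2 ≤ (∫ a, |f a| * |g a| ∂μ) ^ 2 := by
        rw [← sq_abs]
        refine pow_le_pow_left₀ (abs_nonneg _) ?_ 2
        simpa only [abs_mul] using abs_integral_le_integral_abs (f := fun a => f a * g a)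
    _ ≤ (√(∫ a, f a ^ 2 ∂μ) * √(∫ a, g a ^ 2 ∂μ)) ^ 2 :=
        pow_le_pow_left₀ (integral_nonneg fun a => by positivity) holder 2
    _ = _ := by
        rw [mul_pow, Real.sq_sqrt (integral_nonneg fun a => sq_nonneg _),
          Real.sq_sqrt (integral_nonneg fun a => sq_nonneg _)]

theorem sq_intervalIntegral_mul_le {f g : ℝ → ℝ} {a b : ℝ} (hab : a ≤ b)
    (hf : ContinuousOn f (Icc a b)) (hg : ContinuousOn g (Icc a b)) :
    (∫ x in a..b, f x * g x) ^ 2 ≤ (∫ x in a..b, f x ^ 2) * ∫ x in a..b, g x ^ 2 := by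
  simp only [intervalIntegral.integral_of_le hab]
  have memLp {h : ℝ → ℝ} (hh : ContinuousOn h (Icc a b)) :
      MemLp h 2 (volume.restrict (Ioc a b)) := by
    obtain ⟨C, hC⟩ := isCompact_Icc.exists_bound_of_continuousOn hh
    refine (MemLp.of_bound (hh.aestronglyMeasurable measurableSet_Icc) C ?_).mono_measure
      (Measure.restrict_mono Ioc_subset_Icc_self le_rfl)
    exact (ae_restrict_iff' measurableSet_Icc).mpr (ae_of_all _ hC)
  exact sq_integral_mul_le (memLp hf) (memLp hg)

theorem abs_intervalIntegral_mul_le {f g : ℝ → ℝ} {a b : ℝ} (hab : a ≤ b)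
    (hf : ContinuousOn f (Icc a b)) (hg : ContinuousOn g (Icc a b)) :
    |∫ x in a..b, f x * g x| ≤ √((∫ x in a..b, f x ^ 2) * ∫ x in a..b, g x ^ 2) :=
  Real.abs_le_sqrt (sq_intervalIntegral_mul_le hab hf hg)

theorem sq_intervalIntegral_le {f : ℝ → ℝ} {b : ℝ} (hb : 0 ≤ b) (hf : ContinuousOn f (Icc 0 b)) :
    (∫ x in 0..b, f x) ^ 2 ≤ b * ∫ x in 0..b, f x ^ 2 := by
  simpa using sq_intervalIntegral_mul_le hb (continuousOn_const (c := (1 : ℝ))) hf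

theorem intervalIntegral_sq_mul_sqrt_one_add_sq_le {f d : ℝ → ℝ} {A : ℝ} (hf : Continuous f)
    (hd : Continuous d) (hdA : ∀ x, |d x| ≤ A) :
    ∫ x in 0..1, (f x * √(1 + d x ^ 2)) ^ 2 ≤
      √(1 + A ^ 2) * ∫ x in 0..1, f x ^ 2 * √(1 + d x ^ 2) := by
  rw [← intervalIntegral.integral_const_mul]
  refine intervalIntegral.integral_mono_on zero_le_one
    (Continuous.intervalIntegrable (by fun_prop) _ _)
    (Continuous.intervalIntegrable (by fun_prop) _ _) fun x _ => ?_
  have hw : √(1 + d x ^ 2) ≤ √(1 + A ^ 2) :=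
    Real.sqrt_le_sqrt (add_le_add_right (sq_le_sq' (abs_le.1 (hdA x)).1 (abs_le.1 (hdA x)).2) 1)
  calc (f x * √(1 + d x ^ 2)) ^ 2 = f x ^ 2 * √(1 + d x ^ 2) * √(1 + d x ^ 2) := by ring
    _ ≤ f x ^ 2 * √(1 + d x ^ 2) * √(1 + A ^ 2) := by gcongr
    _ = √(1 + A ^ 2) * (f x ^ 2 * √(1 + d x ^ 2)) := by ring

theorem intervalIntegral_sq_sub_integral_le {f : ℝ → ℝ} (hf : ContinuousOn f (Icc 0 1)) :
    ∫ x in 0..1, (f x - ∫ y in 0..1, f y) ^ 2 ≤ ∫ x in 0..1, f x ^ 2 := by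
  have hi : IntervalIntegrable f volume 0 1 := hf.intervalIntegrable_of_Icc zero_le_one
  have hi2 : IntervalIntegrable (fun x => f x ^ 2) volume 0 1 :=
    (hf.pow 2).intervalIntegrable_of_Icc zero_le_one
  set m := ∫ y in 0..1, f y
  have expand : ∫ x in 0..1, (f x - m) ^ 2 = (∫ x in 0..1, f x ^ 2) - m ^ 2 := by
    have hsq (x : ℝ) : (f x - m) ^ 2 = f x ^ 2 - m * 2 * f x + m ^ 2 := by ring
    simp_rw [hsq]
    rw [intervalIntegral.integral_add (hi2.sub (hi.const_mul _)) intervalIntegrable_const,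
      intervalIntegral.integral_sub hi2 (hi.const_mul _), intervalIntegral.integral_const_mul,
      intervalIntegral.integral_const]
    simp only [smul_eq_mul]
    ring
  rw [expand]
  linarith [sq_nonneg m]

theorem pos_and_le_one_of_mul_natCast_eq_one {ε : ℝ} {N : ℕ} (hεN : ε * N = 1) :
    0 < ε ∧ ε ≤ 1 := by
  have hN : (1 : ℝ) ≤ N := Nat.one_le_cast.2 (Nat.pos_of_ne_zero (by rintro rfl; simp at hεN))
  have hε : 0 < ε := pos_of_mul_pos_left (hεN ▸ one_pos) N.cast_nonneg
  exact ⟨hε, by nlinarith⟩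

namespace Function.Periodic

variable {f : ℝ → ℝ} {T : ℝ}

theorem intervalIntegral_natCast_mul (hf : Periodic f T) (hc : Continuous f) (N : ℕ) :
    ∫ x in 0..N * T, f x = N * ∫ x in 0..T, f x := by
  simpa [zsmul_eq_mul] using
    hf.intervalIntegral_add_zsmul_eq N 0 fun a b => hc.intervalIntegrable a b

theorem intervalIntegral_comp_div_of_mul_natCast_eq_one (hf : Periodic f 1) (hc : Continuous f)
    {ε : ℝ} {N : ℕ} (hεN : ε * N = 1) :
    ∫ x in 0..1, f (x / ε) = ∫ x in 0..1, f x := by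
  have hε : ε ≠ 0 := left_ne_zero_of_mul_eq_one hεN
  rw [intervalIntegral.integral_comp_div f hε, zero_div, one_div,
    ← eq_inv_of_mul_eq_one_right hεN, ← mul_one (N : ℝ), hf.intervalIntegral_natCast_mul hc,
    smul_eq_mul, ← mul_assoc, hεN, one_mul]

theorem intervalIntegral_sub_unit_integral_eq_zero (hf : Periodic f T) (hc : Continuous f)
    {N : ℕ} (hNT : N * T = 1) :
    ∫ x in 0..T, (f x - ∫ y in 0..1, f y) = 0 := by
  have hsplit : ∫ y in 0..1, f y = N * ∫ y in 0..T, f y := by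
    rw [← hNT, hf.intervalIntegral_natCast_mul hc]
  rw [intervalIntegral.integral_sub (hc.intervalIntegrable _ _) intervalIntegrable_const,
    intervalIntegral.integral_const, hsplit, smul_eq_mul]
  linear_combination (-∫ x in 0..T, f x) * hNT

theorem primitive_of_intervalIntegral_eq_zero (hf : Periodic f T) (hc : Continuous f)
    (h0 : ∫ x in 0..T, f x = 0) :
    Periodic (fun x => ∫ t in 0..x, f t) T := fun x => by
  simp only
  rw [← intervalIntegral.integral_add_adjacent_intervals (hc.intervalIntegrable 0 x)
    (hc.intervalIntegrable x (x + T)), hf.intervalIntegral_add_eq x 0, zero_add, h0, add_zero]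

theorem intervalIntegral_sq_primitive_le (hf : Periodic f T) (hc : Continuous f) (hT : 0 ≤ T)
    (h0 : ∫ x in 0..T, f x = 0) (N : ℕ) :
    ∫ x in 0..N * T, (∫ t in 0..x, f t) ^ 2 ≤ T ^ 2 * ∫ x in 0..N * T, f x ^ 2 := by
  have hF : Continuous fun x => ∫ t in 0..x, f t :=
    intervalIntegral.continuous_primitive (fun a b => hc.intervalIntegrable a b) 0
  have hF_period : ∀ x ∈ Icc 0 T, (∫ t in 0..x, f t) ^ 2 ≤ T * ∫ t in 0..T, f t ^ 2 := by
    intro x hx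
    refine (sq_intervalIntegral_le hx.1 hc.continuousOn).trans ?_
    exact mul_le_mul hx.2 (intervalIntegral.integral_mono_interval le_rfl hx.1 hx.2
      (ae_of_all _ fun t => sq_nonneg _) ((hc.pow 2).intervalIntegrable _ _))
      (intervalIntegral.integral_nonneg hx.1 fun t _ => sq_nonneg _) hT
  have hF_sq : Periodic (fun x => (∫ t in 0..x, f t) ^ 2) T :=
    (hf.primitive_of_intervalIntegral_eq_zero hc h0).comp (· ^ 2)
  have hf_sq : Periodic (fun x => f x ^ 2) T := hf.comp (· ^ 2)
  rw [hF_sq.intervalIntegral_natCast_mul (hF.pow 2), hf_sq.intervalIntegral_natCast_mul (hc.pow 2)]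
  have h_one_period : ∫ x in 0..T, (∫ t in 0..x, f t) ^ 2 ≤ T * (T * ∫ t in 0..T, f t ^ 2) := by
    simpa using intervalIntegral.integral_mono_on (μ := volume) hT
      ((hF.pow 2).intervalIntegrable _ _) intervalIntegrable_const hF_period
  calc (N : ℝ) * ∫ x in 0..T, (∫ t in 0..x, f t) ^ 2
      ≤ N * (T * (T * ∫ t in 0..T, f t ^ 2)) :=
        mul_le_mul_of_nonneg_left h_one_period N.cast_nonneg
    _ = T ^ 2 * (N * ∫ x in 0..T, f x ^ 2) := by ring

theorem intervalIntegral_sq_primitive_sub_integral_le (hf : Periodic f T) (hc : Continuous f)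
    (hT : 0 ≤ T) {N : ℕ} (hNT : N * T = 1) :
    ∫ x in 0..1, (∫ t in 0..x, (f t - ∫ y in 0..1, f y)) ^ 2 ≤
      T ^ 2 * ∫ x in 0..1, (f x - ∫ y in 0..1, f y) ^ 2 := by
  have hq_per : Periodic (fun x => f x - ∫ y in 0..1, f y) T := fun x => by simp only [hf x]
  simpa only [hNT] using hq_per.intervalIntegral_sq_primitive_le (hc.sub continuous_const) hT
    (hf.intervalIntegral_sub_unit_integral_eq_zero hc hNT) N

theorem deriv {c : ℝ} (hf : Periodic f c) : Periodic (_root_.deriv f) c := fun x => by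
  simpa only [hf.funext] using (_root_.deriv_comp_add_const (f := f) (a := c) (x := x)).symm

end Function.Periodic

theorem Continuous.integrableOn_Ioo_prod_Ioo {f : ℝ × ℝ → ℝ} (hf : Continuous f) (a b c d : ℝ) :
    IntegrableOn f (Ioo a b ×ˢ Ioo c d) :=
  (hf.continuousOn.integrableOn_compact (isCompact_Icc.prod isCompact_Icc)).mono_set
    (prod_mono Ioo_subset_Icc_self Ioo_subset_Icc_self)

theorem setIntegral_Ioo_prod_Ioo_eq {f : ℝ × ℝ → ℝ} (hf : Continuous f) {a b c d : ℝ}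
    (hab : a ≤ b) (hcd : c ≤ d) :
    ∫ z in Ioo a b ×ˢ Ioo c d, f z = ∫ x in a..b, ∫ y in c..d, f (x, y) := by
  have hint := hf.integrableOn_Ioo_prod_Ioo a b c d
  rw [Measure.volume_eq_prod] at hint ⊢
  rw [setIntegral_prod f hint]
  simp only [intervalIntegral.integral_of_le hab, intervalIntegral.integral_of_le hcd,
    integral_Ioc_eq_integral_Ioo]

theorem setIntegral_Ioo_prod_Ioo_eq_swap {f : ℝ × ℝ → ℝ} (hf : Continuous f) {a b c d : ℝ}
    (hab : a ≤ b) (hcd : c ≤ d) :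
    ∫ z in Ioo a b ×ˢ Ioo c d, f z = ∫ y in c..d, ∫ x in a..b, f (x, y) := by
  rw [setIntegral_Ioo_prod_Ioo_eq hf hab hcd, intervalIntegral_intervalIntegral_swap]
  rw [uIoc_of_le hab, uIoc_of_le hcd]
  exact (hf.continuousOn.integrableOn_compact (isCompact_Icc.prod isCompact_Icc)).mono_set
    (prod_mono Ioc_subset_Icc_self Ioc_subset_Icc_self)

theorem exists_mem_Ioo_mul_intervalIntegral_le {f : ℝ × ℝ → ℝ} (hf : Continuous f)
    (hf_nonneg : ∀ z, 0 ≤ f z) {ε : ℝ} (hε : 0 < ε) (hε₁ : ε ≤ 1) :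
    ∃ s ∈ Ioo 0 ε, ε * ∫ x in 0..1, f (x, s) ≤ ∫ z in Ioo 0 1 ×ˢ Ioo 0 1, f z := by
  set G : ℝ → ℝ := fun s => ∫ x in 0..1, f (x, s)
  have hG : Continuous G :=
    intervalIntegral.continuous_parametric_intervalIntegral_of_continuous'
      (f := fun s x => f (x, s)) (hf.comp continuous_swap) 0 1
  obtain ⟨s, hs, hGs⟩ := exists_le_setAverage (μ := volume) (s := Ioo 0 ε) (by simp [hε])
    (by simp) (hG.integrableOn_Icc.mono_set Ioo_subset_Icc_self)
  refine ⟨s, hs, ?_⟩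
  rw [setAverage_eq, Real.volume_real_Ioo_of_le hε.le, sub_zero, smul_eq_mul,
    ← integral_Ioc_eq_integral_Ioo, ← intervalIntegral.integral_of_le hε.le,
    ← setIntegral_Ioo_prod_Ioo_eq_swap hf zero_le_one hε.le] at hGs
  calc ε * G s ≤ ∫ z in Ioo 0 1 ×ˢ Ioo 0 ε, f z := by
        rwa [le_inv_mul_iff₀ hε] at hGs
    _ ≤ ∫ z in Ioo 0 1 ×ˢ Ioo 0 1, f z :=
        setIntegral_mono_set (hf.integrableOn_Ioo_prod_Ioo 0 1 0 1)
          (ae_of_all _ fun z => hf_nonneg z)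
          (prod_mono subset_rfl (Ioo_subset_Ioo_right hε₁)).eventuallyLE

theorem intervalIntegral_mul_eq_neg_primitive_mul {q v v' : ℝ → ℝ} {a b : ℝ} (hab : a ≤ b)
    (hq : Continuous q) (hq_mean : ∫ x in a..b, q x = 0) (hv : ContinuousOn v (Icc a b))
    (hv' : ContinuousOn v' (Icc a b)) (hderiv : ∀ x ∈ Ioo a b, HasDerivAt v (v' x) x) :
    ∫ x in a..b, q x * v x = -∫ x in a..b, (∫ t in a..x, q t) * v' x := by
  have parts := intervalIntegral.integral_mul_deriv_eq_deriv_mul_of_hasDerivAt (a := a) (b := b)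
    (u := v) (u' := v') (v := fun x => ∫ t in a..x, q t) (v' := q) (by rwa [uIcc_of_le hab])
    (intervalIntegral.continuous_primitive (fun _ _ => hq.intervalIntegrable _ _) a).continuousOn
    (by simpa [hab] using hderiv)
    (fun x _ => intervalIntegral.integral_hasDerivAt_right (hq.intervalIntegrable _ _)
      hq.aestronglyMeasurable.stronglyMeasurableAtFilter hq.continuousAt)
    (hv'.intervalIntegrable_of_Icc hab) (hq.intervalIntegrable _ _)
  simp only [hq_mean, intervalIntegral.integral_same, mul_zero, sub_zero, zero_sub] at parts
  simp only [mul_comm (q _), parts, mul_comm (v' _)]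

theorem intervalIntegral_mul_sub_const_mul_eq {f g k : ℝ → ℝ} (hf : Continuous f)
    (hg : Continuous g) (hk : Continuous k) (c : ℝ) :
    (∫ x in 0..1, f x * g x) - c * ∫ x in 0..1, k x =
      (∫ x in 0..1, f x * (g x - k x)) + ∫ x in 0..1, (f x - c) * k x := by
  calc (∫ x in 0..1, f x * g x) - c * ∫ x in 0..1, k x = ∫ x in 0..1, (f x * g x - c * k x) := by
        rw [intervalIntegral.integral_sub (f := fun x => f x * g x) (g := fun x => c * k x)
          ((hf.mul hg).intervalIntegrable 0 1) ((continuous_const.mul hk).intervalIntegrable 0 1),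
          intervalIntegral.integral_const_mul]
    _ = ∫ x in 0..1, (f x * (g x - k x) + (f x - c) * k x) := by
        congr 1
        ext x
        ring
    _ = _ := intervalIntegral.integral_add ((hf.mul (hg.sub hk)).intervalIntegrable 0 1)
        (((hf.sub continuous_const).mul hk).intervalIntegrable 0 1)

theorem setIntegral_Ioo_prod_Ioo_mono {f g : ℝ × ℝ → ℝ} (hf : Continuous f) (hg : Continuous g)
    (hfg : ∀ z, f z ≤ g z) (a b c d : ℝ) :
    ∫ z in Ioo a b ×ˢ Ioo c d, f z ≤ ∫ z in Ioo a b ×ˢ Ioo c d, g z :=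
  setIntegral_mono (hf.integrableOn_Ioo_prod_Ioo a b c d) (hg.integrableOn_Ioo_prod_Ioo a b c d) hfg

-- Continuity on all of `ℝ²` (obtained by composing with `unitSquareProj`) keeps the parametric
-- integrals below continuous without bookkeeping at the edges of the square.
structure HasPartialsOnUnitSquare (u u₁ u₂ : ℝ × ℝ → ℝ) : Prop where
  continuous : Continuous u
  continuous₁ : Continuous u₁
  continuous₂ : Continuous u₂
  hasDerivAt₁ : ∀ x ∈ Ioo (0 : ℝ) 1, ∀ y ∈ Icc (0 : ℝ) 1,
    HasDerivAt (fun r => u (r, y)) (u₁ (x, y)) x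
  hasDerivAt₂ : ∀ x ∈ Icc (0 : ℝ) 1, ∀ y ∈ Ioo (0 : ℝ) 1,
    HasDerivAt (fun r => u (x, r)) (u₂ (x, y)) y

namespace HasPartialsOnUnitSquare

variable {u u₁ u₂ : ℝ × ℝ → ℝ} (hu : HasPartialsOnUnitSquare u u₁ u₂)
include hu

theorem setIntegral_sq_partials_le :
    (∫ z in Ioo 0 1 ×ˢ Ioo 0 1, u₁ z ^ 2) ≤
        ∫ z in Ioo 0 1 ×ˢ Ioo 0 1, (u z ^ 2 + (u₁ z ^ 2 + u₂ z ^ 2)) ∧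
      (∫ z in Ioo 0 1 ×ˢ Ioo 0 1, u₂ z ^ 2) ≤
        ∫ z in Ioo 0 1 ×ˢ Ioo 0 1, (u z ^ 2 + (u₁ z ^ 2 + u₂ z ^ 2)) := by
  have hE : Continuous fun z => u z ^ 2 + (u₁ z ^ 2 + u₂ z ^ 2) :=
    (hu.continuous.pow 2).add ((hu.continuous₁.pow 2).add (hu.continuous₂.pow 2))
  exact ⟨setIntegral_Ioo_prod_Ioo_mono (f := fun z => u₁ z ^ 2) (hu.continuous₁.pow 2) hE
      (fun z => by nlinarith [sq_nonneg (u z), sq_nonneg (u₂ z)]) 0 1 0 1,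
    setIntegral_Ioo_prod_Ioo_mono (f := fun z => u₂ z ^ 2) (hu.continuous₂.pow 2) hE
      (fun z => by nlinarith [sq_nonneg (u z), sq_nonneg (u₁ z)]) 0 1 0 1⟩

theorem sq_sub_le {x b : ℝ} (hx : x ∈ Icc 0 1) (hb : b ∈ Icc 0 1) :
    (u (x, b) - u (x, 0)) ^ 2 ≤ b * ∫ y in 0..1, u₂ (x, y) ^ 2 := by
  have hu₂ : Continuous fun y => u₂ (x, y) := hu.continuous₂.comp (Continuous.prodMk_right x)
  have ftc : ∫ y in 0..b, u₂ (x, y) = u (x, b) - u (x, 0) :=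
    intervalIntegral.integral_eq_sub_of_hasDerivAt_of_le hb.1
      (hu.continuous.comp (Continuous.prodMk_right x)).continuousOn
      (fun y hy => hu.hasDerivAt₂ x hx y ⟨hy.1, hy.2.trans_le hb.2⟩) (hu₂.intervalIntegrable _ _)
  rw [← ftc]
  refine (sq_intervalIntegral_le hb.1 hu₂.continuousOn).trans
    (mul_le_mul_of_nonneg_left ?_ hb.1)
  exact intervalIntegral.integral_mono_interval le_rfl hb.1 hb.2
    (ae_of_all _ fun y => sq_nonneg _) ((hu₂.pow 2).intervalIntegrable _ _)

theorem intervalIntegral_sq_sub_le {h : ℝ → ℝ} (hh : Continuous h) {H : ℝ}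
    (hh_mem : ∀ x ∈ Icc (0 : ℝ) 1, h x ∈ Icc 0 1) (hH : ∀ x ∈ Icc (0 : ℝ) 1, h x ≤ H) :
    ∫ x in 0..1, (u (x, h x) - u (x, 0)) ^ 2 ≤ H * ∫ z in Ioo 0 1 ×ˢ Ioo 0 1, u₂ z ^ 2 := by
  set F : ℝ → ℝ := fun x => ∫ y in 0..1, u₂ (x, y) ^ 2
  have hF : Continuous F :=
    intervalIntegral.continuous_parametric_intervalIntegral_of_continuous'
      (hu.continuous₂.pow 2) 0 1
  have hdiff : Continuous fun x => u (x, h x) - u (x, 0) :=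
    (hu.continuous.comp (continuous_id.prodMk hh)).sub
      (hu.continuous.comp (continuous_id.prodMk continuous_const))
  have hpointwise : ∀ x ∈ Icc (0 : ℝ) 1, (u (x, h x) - u (x, 0)) ^ 2 ≤ H * F x := fun x hx =>
    (hu.sq_sub_le hx (hh_mem x hx)).trans (mul_le_mul_of_nonneg_right (hH x hx)
      (intervalIntegral.integral_nonneg zero_le_one fun y _ => sq_nonneg _))
  calc ∫ x in 0..1, (u (x, h x) - u (x, 0)) ^ 2 ≤ ∫ x in 0..1, H * F x :=
        intervalIntegral.integral_mono_on zero_le_one ((hdiff.pow 2).intervalIntegrable _ _)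
          ((continuous_const.mul hF).intervalIntegrable _ _) hpointwise
    _ = H * ∫ z in Ioo 0 1 ×ˢ Ioo 0 1, u₂ z ^ 2 := by
        rw [intervalIntegral.integral_const_mul, setIntegral_Ioo_prod_Ioo_eq
          (f := fun z => u₂ z ^ 2) (hu.continuous₂.pow 2) zero_le_one zero_le_one]

theorem abs_intervalIntegral_mul_bottom_le {q : ℝ → ℝ} (hq : Continuous q)
    (hq_mean : ∫ x in 0..1, q x = 0) {ε : ℝ} (hε : 0 < ε) (hε₁ : ε ≤ 1)
    (hQ : ∫ x in 0..1, (∫ t in 0..x, q t) ^ 2 ≤ ε ^ 2 * ∫ x in 0..1, q x ^ 2) :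
    |∫ x in 0..1, q x * u (x, 0)| ≤
      √(ε * (∫ x in 0..1, q x ^ 2) * ∫ z in Ioo 0 1 ×ˢ Ioo 0 1, u₁ z ^ 2) +
        √(ε * (∫ x in 0..1, q x ^ 2) * ∫ z in Ioo 0 1 ×ˢ Ioo 0 1, u₂ z ^ 2) := by
  set Z := ∫ x in 0..1, q x ^ 2
  have hZ : 0 ≤ Z := intervalIntegral.integral_nonneg zero_le_one fun x _ => sq_nonneg _
  obtain ⟨s, hs, hline⟩ := exists_mem_Ioo_mul_intervalIntegral_le (f := fun z => u₁ z ^ 2)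
    (hu.continuous₁.pow 2) (fun z => sq_nonneg _) hε hε₁
  have hs₁ : s ∈ Icc (0 : ℝ) 1 := ⟨hs.1.le, hs.2.le.trans hε₁⟩
  have hu_s : Continuous fun x => u (x, s) := hu.continuous.comp (Continuous.prodMk_left s)
  have hu₁_s : Continuous fun x => u₁ (x, s) := hu.continuous₁.comp (Continuous.prodMk_left s)
  have hdiff : Continuous fun x => u (x, s) - u (x, 0) :=
    hu_s.sub (hu.continuous.comp (Continuous.prodMk_left 0))
  have split : ∫ x in 0..1, q x * u (x, 0) =
      (∫ x in 0..1, q x * u (x, s)) - ∫ x in 0..1, q x * (u (x, s) - u (x, 0)) := by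
    rw [← intervalIntegral.integral_sub (f := fun x => q x * u (x, s))
      (g := fun x => q x * (u (x, s) - u (x, 0)))
      ((hq.mul hu_s).intervalIntegrable _ _) ((hq.mul hdiff).intervalIntegrable _ _)]
    simp only [mul_sub, sub_sub_cancel]
  have on_line : |∫ x in 0..1, q x * u (x, s)| ≤
      √(ε * Z * ∫ z in Ioo 0 1 ×ˢ Ioo 0 1, u₁ z ^ 2) := by
    rw [intervalIntegral_mul_eq_neg_primitive_mul zero_le_one hq hq_mean hu_s.continuousOn
      hu₁_s.continuousOn fun x hx => hu.hasDerivAt₁ x hx s hs₁, abs_neg]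
    refine (abs_intervalIntegral_mul_le zero_le_one
      (intervalIntegral.continuous_primitive (fun _ _ => hq.intervalIntegrable _ _) 0).continuousOn
      hu₁_s.continuousOn).trans (Real.sqrt_le_sqrt ?_)
    have hL : 0 ≤ ∫ x in 0..1, u₁ (x, s) ^ 2 :=
      intervalIntegral.integral_nonneg zero_le_one fun x _ => sq_nonneg _
    calc (∫ x in 0..1, (∫ t in 0..x, q t) ^ 2) * ∫ x in 0..1, u₁ (x, s) ^ 2
        ≤ ε ^ 2 * Z * ∫ x in 0..1, u₁ (x, s) ^ 2 := mul_le_mul_of_nonneg_right hQ hL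
      _ = ε * Z * (ε * ∫ x in 0..1, u₁ (x, s) ^ 2) := by ring
      _ ≤ ε * Z * ∫ z in Ioo 0 1 ×ˢ Ioo 0 1, u₁ z ^ 2 :=
        mul_le_mul_of_nonneg_left hline (by positivity)
  have to_line : |∫ x in 0..1, q x * (u (x, s) - u (x, 0))| ≤
      √(ε * Z * ∫ z in Ioo 0 1 ×ˢ Ioo 0 1, u₂ z ^ 2) := by
    refine (abs_intervalIntegral_mul_le zero_le_one hq.continuousOn
      hdiff.continuousOn).trans (Real.sqrt_le_sqrt ?_)
    rw [mul_comm ε, mul_assoc]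
    exact mul_le_mul_of_nonneg_left (hu.intervalIntegral_sq_sub_le continuous_const
      (fun _ _ => hs₁) fun _ _ => hs.2.le) hZ
  rw [split]
  exact (abs_sub _ _).trans (add_le_add on_line to_line)

theorem abs_intervalIntegral_oscillating_sub_le {p : ℝ → ℝ} (hp : Continuous p)
    (hp_per : Function.Periodic p 1) {ε : ℝ} {N : ℕ} (hεN : ε * N = 1) {h : ℝ → ℝ}
    (hh : Continuous h) {H : ℝ} (hh_mem : ∀ x ∈ Icc (0 : ℝ) 1, h x ∈ Icc 0 1)
    (hH : ∀ x ∈ Icc (0 : ℝ) 1, h x ≤ H) :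
    |(∫ x in 0..1, p (x / ε) * u (x, h x)) - (∫ t in 0..1, p t) * ∫ x in 0..1, u (x, 0)| ≤
      (√H + 2 * √ε) * √(∫ x in 0..1, p (x / ε) ^ 2) *
        √(∫ z in Ioo 0 1 ×ˢ Ioo 0 1, (u z ^ 2 + (u₁ z ^ 2 + u₂ z ^ 2))) := by
  obtain ⟨hε, hε₁⟩ := pos_and_le_one_of_mul_natCast_eq_one hεN
  have hH₀ : 0 ≤ H := (hh_mem 0 (left_mem_Icc.2 zero_le_one)).1.trans
    (hH 0 (left_mem_Icc.2 zero_le_one))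
  set pe : ℝ → ℝ := fun x => p (x / ε)
  have hpe : Continuous pe := hp.comp (continuous_id.div_const ε)
  have hpe_per : Function.Periodic pe ε := by simpa using hp_per.div_const ε
  set q : ℝ → ℝ := fun x => pe x - ∫ y in 0..1, pe y
  have hq_mean : ∫ x in 0..1, q x = 0 := by
    simp [q, intervalIntegral.integral_sub (hpe.intervalIntegrable 0 1) intervalIntegrable_const]
  have hQ := hpe_per.intervalIntegral_sq_primitive_sub_integral_le hpe hε.le
    (by rw [mul_comm]; exact hεN)
  set W := ∫ x in 0..1, pe x ^ 2
  set E := ∫ z in Ioo 0 1 ×ˢ Ioo 0 1, (u z ^ 2 + (u₁ z ^ 2 + u₂ z ^ 2))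
  have hW : 0 ≤ W := intervalIntegral.integral_nonneg zero_le_one fun x _ => sq_nonneg _
  have hqW : ∫ x in 0..1, q x ^ 2 ≤ W := intervalIntegral_sq_sub_integral_le hpe.continuousOn
  obtain ⟨hE₁, hE₂⟩ := hu.setIntegral_sq_partials_le
  have hu_0 : Continuous fun x => u (x, 0) := hu.continuous.comp (Continuous.prodMk_left 0)
  have hu_h : Continuous fun x => u (x, h x) := hu.continuous.comp (continuous_id.prodMk hh)
  have graph_sq : ∫ x in 0..1, (u (x, h x) - u (x, 0)) ^ 2 ≤ H * E :=
    (hu.intervalIntegral_sq_sub_le hh hh_mem hH).trans (mul_le_mul_of_nonneg_left hE₂ hH₀)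
  have graph : |∫ x in 0..1, pe x * (u (x, h x) - u (x, 0))| ≤ √(W * (H * E)) :=
    (abs_intervalIntegral_mul_le zero_le_one hpe.continuousOn (hu_h.sub hu_0).continuousOn).trans
      (Real.sqrt_le_sqrt (mul_le_mul_of_nonneg_left graph_sq hW))
  have bottom := hu.abs_intervalIntegral_mul_bottom_le (q := q) (hpe.sub continuous_const)
    hq_mean hε hε₁ hQ
  rw [← hp_per.intervalIntegral_comp_div_of_mul_natCast_eq_one hp hεN,
    intervalIntegral_mul_sub_const_mul_eq hpe hu_h hu_0]
  calc _ ≤ √(W * (H * E)) + (√(ε * W * E) + √(ε * W * E)) := by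
        refine (abs_add_le _ _).trans (add_le_add graph (bottom.trans ?_))
        gcongr
    _ = (√H + 2 * √ε) * √W * √E := by
        simp only [Real.sqrt_mul, hH₀, hW, hε.le, mul_nonneg]
        ring

end HasPartialsOnUnitSquare

noncomputable def unitSquareProj (z : ℝ × ℝ) : ℝ × ℝ :=
  (projIcc 0 1 zero_le_one z.1, projIcc 0 1 zero_le_one z.2)

theorem continuous_unitSquareProj : Continuous unitSquareProj :=
  (continuous_subtype_val.comp (continuous_projIcc.comp continuous_fst)).prodMk
    (continuous_subtype_val.comp (continuous_projIcc.comp continuous_snd))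

theorem unitSquareProj_mem (z : ℝ × ℝ) : unitSquareProj z ∈ Icc (0 : ℝ) 1 ×ˢ Icc (0 : ℝ) 1 :=
  ⟨Subtype.prop _, Subtype.prop _⟩

theorem unitSquareProj_of_mem {z : ℝ × ℝ} (hz : z ∈ Icc (0 : ℝ) 1 ×ˢ Icc (0 : ℝ) 1) :
    unitSquareProj z = z := by
  simp [unitSquareProj, projIcc_of_mem _ hz.1, projIcc_of_mem _ hz.2]

theorem hasDerivAt_comp_unitSquareProj {φ : ℝ × ℝ → ℝ} {U : Set (ℝ × ℝ)} (hU : IsOpen U)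
    (hsq : Icc (0 : ℝ) 1 ×ˢ Icc (0 : ℝ) 1 ⊆ U) (hφ : DifferentiableOn ℝ φ U)
    {c : ℝ → ℝ × ℝ} {v : ℝ × ℝ} {x : ℝ} (hc : HasDerivAt c v x)
    (hc_mem : ∀ᶠ r in nhds x, c r ∈ Icc (0 : ℝ) 1 ×ˢ Icc (0 : ℝ) 1) :
    HasDerivAt (fun r => φ (unitSquareProj (c r))) (fderiv ℝ φ (c x) v) x := by
  have hφ' : HasFDerivAt φ (fderiv ℝ φ (c x)) (c x) :=
    (hφ.differentiableAt (hU.mem_nhds (hsq hc_mem.self_of_nhds))).hasFDerivAt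
  exact (hφ'.comp_hasDerivAt x hc).congr_of_eventuallyEq
    (hc_mem.mono fun r hr => by simp only [Function.comp, unitSquareProj_of_mem hr])

theorem ContDiffOn.hasPartialsOnUnitSquare_comp_unitSquareProj {φ : ℝ × ℝ → ℝ}
    {U : Set (ℝ × ℝ)} (hφ : ContDiffOn ℝ 1 φ U) (hU : IsOpen U)
    (hsq : Icc (0 : ℝ) 1 ×ˢ Icc (0 : ℝ) 1 ⊆ U) :
    HasPartialsOnUnitSquare (φ ∘ unitSquareProj) (pd1 φ ∘ unitSquareProj)
      (pd2 φ ∘ unitSquareProj) := by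
  have hcomp {ψ : ℝ × ℝ → ℝ} (hψ : ContinuousOn ψ U) : Continuous (ψ ∘ unitSquareProj) :=
    hψ.comp_continuous continuous_unitSquareProj fun z => hsq (unitSquareProj_mem z)
  have hfderiv := hφ.continuousOn_fderiv_of_isOpen hU le_rfl
  have hdiff := hφ.differentiableOn one_ne_zero
  refine ⟨hcomp hφ.continuousOn, hcomp (hfderiv.clm_apply continuousOn_const),
    hcomp (hfderiv.clm_apply continuousOn_const), fun x hx y hy => ?_, fun x hx y hy => ?_⟩
  · rw [Function.comp_apply, unitSquareProj_of_mem ⟨Ioo_subset_Icc_self hx, hy⟩]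
    exact hasDerivAt_comp_unitSquareProj hU hsq hdiff
      ((hasDerivAt_id x).prodMk (hasDerivAt_const x y))
      (Filter.mem_of_superset (Icc_mem_nhds hx.1 hx.2) fun r hr => ⟨hr, hy⟩)
  · rw [Function.comp_apply, unitSquareProj_of_mem ⟨hx, Ioo_subset_Icc_self hy⟩]
    exact hasDerivAt_comp_unitSquareProj hU hsq hdiff
      ((hasDerivAt_const y x).prodMk (hasDerivAt_id y))
      (Filter.mem_of_superset (Icc_mem_nhds hy.1 hy.2) fun r hr => ⟨hx, hr⟩)

theorem ContDiffOn.abs_intervalIntegral_oscillating_sub_le {φ : ℝ × ℝ → ℝ} {U : Set (ℝ × ℝ)}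
    (hφ : ContDiffOn ℝ 1 φ U) (hU : IsOpen U) (hsq : Icc (0 : ℝ) 1 ×ˢ Icc (0 : ℝ) 1 ⊆ U)
    {p : ℝ → ℝ} (hp : Continuous p) (hp_per : Function.Periodic p 1) {ε : ℝ} {N : ℕ}
    (hεN : ε * N = 1) {h : ℝ → ℝ} (hh : Continuous h) {H : ℝ}
    (hh_mem : ∀ x ∈ Icc (0 : ℝ) 1, h x ∈ Icc 0 1) (hH : ∀ x ∈ Icc (0 : ℝ) 1, h x ≤ H) :
    |(∫ x in 0..1, p (x / ε) * φ (x, h x)) - (∫ t in 0..1, p t) * ∫ x in 0..1, φ (x, 0)| ≤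
      (√H + 2 * √ε) * √(∫ x in 0..1, p (x / ε) ^ 2) *
        √(∫ z in Ioo 0 1 ×ˢ Ioo 0 1, (φ z ^ 2 + (pd1 φ z ^ 2 + pd2 φ z ^ 2))) := by
  have on_graph : ∫ x in 0..1, p (x / ε) * φ (x, h x) =
      ∫ x in 0..1, p (x / ε) * (φ ∘ unitSquareProj) (x, h x) :=
    intervalIntegral.integral_congr fun x hx => by
      rw [uIcc_of_le zero_le_one] at hx
      rw [Function.comp_apply, unitSquareProj_of_mem ⟨hx, hh_mem x hx⟩]
  have on_bottom : ∫ x in 0..1, φ (x, 0) = ∫ x in 0..1, (φ ∘ unitSquareProj) (x, 0) :=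
    intervalIntegral.integral_congr fun x hx => by
      rw [uIcc_of_le zero_le_one] at hx
      rw [Function.comp_apply, unitSquareProj_of_mem ⟨hx, left_mem_Icc.2 zero_le_one⟩]
  have on_square : ∫ z in Ioo 0 1 ×ˢ Ioo 0 1, (φ z ^ 2 + (pd1 φ z ^ 2 + pd2 φ z ^ 2)) =
      ∫ z in Ioo 0 1 ×ˢ Ioo 0 1, ((φ ∘ unitSquareProj) z ^ 2 +
        ((pd1 φ ∘ unitSquareProj) z ^ 2 + (pd2 φ ∘ unitSquareProj) z ^ 2)) :=
    setIntegral_congr_fun (measurableSet_Ioo.prod measurableSet_Ioo) fun z hz => by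
      simp only [Function.comp_apply,
        unitSquareProj_of_mem (prod_mono Ioo_subset_Icc_self Ioo_subset_Icc_self hz)]
  rw [on_graph, on_bottom, on_square]
  exact (hφ.hasPartialsOnUnitSquare_comp_unitSquareProj hU hsq
    ).abs_intervalIntegral_oscillating_sub_le hp hp_per hεN hh hh_mem hH

/-- Estimate (3.7) in the proof of Lemma 3.3 of the paper: the difference
between the oscillatory boundary pairing on the rough boundary and the
homogenized pairing on the flat boundary is of order `√ε`, with constant
depending only on `A = sup |γ'|` and `sup γ`. -/
theorem boundary_homogenization_estimate
    (γ : ℝ → ℝ) (hγ : ContDiff ℝ 1 γ) (hper : ∀ t, γ (t + 1) = γ t)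
    (hpos : ∀ t, 0 ≤ γ t)
    (A : ℝ) (hA : IsLUB (Set.range fun t => |deriv γ t|) A) :
    ∃ C > (0:ℝ),
      ∀ g : ℝ → ℝ, Continuous g → (∀ t, g (t + 1) = g t) →
      ∀ N : ℕ, 0 < N → ∀ ε : ℝ, ε = 1 / (N : ℝ) → (∀ t, ε * γ t ≤ 1) →
      ∀ φ : ℝ × ℝ → ℝ, ∀ U : Set (ℝ × ℝ), IsOpen U →
        Set.Icc (0:ℝ) 1 ×ˢ Set.Icc (0:ℝ) 1 ⊆ U → ContDiffOn ℝ 1 φ U →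
      |(∫ x₁ in (0:ℝ)..1,
            (g (x₁ / ε) * Real.sqrt (1 + (deriv γ (x₁ / ε)) ^ 2)) *
              φ (x₁, ε * γ (x₁ / ε))) -
          (∫ t in (0:ℝ)..1, g t * Real.sqrt (1 + (deriv γ t) ^ 2)) *
            ∫ x₁ in (0:ℝ)..1, φ (x₁, 0)| ≤
        C * Real.sqrt ε *
          Real.sqrt (∫ x₁ in (0:ℝ)..1,
            (g (x₁ / ε)) ^ 2 * Real.sqrt (1 + (deriv γ (x₁ / ε)) ^ 2)) *
          Real.sqrt (∫ x in Set.Ioo (0:ℝ) 1 ×ˢ Set.Ioo (0:ℝ) 1,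
            ((φ x) ^ 2 + ((pd1 φ x) ^ 2 + (pd2 φ x) ^ 2))) := by
  have hγ_per : Function.Periodic γ 1 := hper
  have hγ' : Continuous (deriv γ) := hγ.continuous_deriv le_rfl
  obtain ⟨G, hG⟩ : BddAbove (range γ) :=
    hγ_per.image_Icc one_pos 0 ▸ (isCompact_Icc.image hγ.continuous).bddAbove
  refine ⟨(√G + 2) * √(√(1 + A ^ 2)), by positivity, ?_⟩
  intro g hg hg_per N hN ε hε hεγ φ U hU hsq hφ
  have hεN : ε * N = 1 := by rw [hε]; field_simp
  have hε₀ : 0 ≤ ε := by rw [hε]; positivity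
  have key := hφ.abs_intervalIntegral_oscillating_sub_le hU hsq
    (p := fun t => g t * √(1 + deriv γ t ^ 2)) (by fun_prop)
    (fun t => by simp only [hg_per t, hγ_per.deriv t]) hεN (h := fun x => ε * γ (x / ε))
    (by fun_prop) (H := ε * G) (fun x _ => ⟨mul_nonneg hε₀ (hpos _), hεγ _⟩)
    (fun x _ => mul_le_mul_of_nonneg_left (hG ⟨_, rfl⟩) hε₀)
  have hW := intervalIntegral_sq_mul_sqrt_one_add_sq_le (f := fun x => g (x / ε))
    (d := fun x => deriv γ (x / ε)) (by fun_prop) (by fun_prop) fun x => hA.1 ⟨_, rfl⟩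
  have hW' := (Real.sqrt_le_sqrt hW).trans_eq (Real.sqrt_mul (Real.sqrt_nonneg _) _)
  rw [Real.sqrt_mul hε₀] at key
  refine key.trans (le_of_le_of_eq (mul_le_mul_of_nonneg_right
    (mul_le_mul_of_nonneg_left hW' (by positivity)) (Real.sqrt_nonneg _)) (by ring))
end
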